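/- arXiv:2405.12088 — 5 statements merged into one kernel-verified Lean document; each statement's English description precedes it below -/
import Mathlib

section
/- There exist positive real constants c1 and c2 such that for every sufficiently large positive integer n, c1·n^{2/3} < n − F_{2,3}(n) ≤ n − f_{2,3}(n) < c2·n^{2/3}. -/
/-!
Write `m = a ^ 2 * b * t ^ 3` with `a`, `b` squarefree and coprime. If `m * m'` is a cube,
then `m'` has the parts `b`, `a` swapped; so the `m ≤ n` with `a < b` contain no two elements
(equal or not) with a cube product, and the remaining `m` are of the form `u ^ 2 * v` with
`v ≤ u` (`u = a t`, `v = b t`), of which there are `O(n ^ (2/3))`.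

Conversely, for distinct squarefree `a, b ≤ n ^ (1/3)` the numbers `a ^ 2 * b ≠ a * b ^ 2` lie
in `[1, n]` and have product `(a * b) ^ 3`, so a set without strictly increasing cube pairs
omits one of them. Since `(a, b) ↦ a ^ 2 * b` is injective on squarefree pairs and a positive
proportion of the integers are squarefree, at least `≫ n ^ (2/3)` integers are omitted.
-/

open Finset Filter

/-- The multiset of the values of `a` can be partitioned into groups,
each consisting of `d` copies of a single number. -/
def TrivialSol (d : ℕ) {k : ℕ} (a : Fin k → ℕ) : Prop :=
  ∀ y : ℕ, d ∣ (List.ofFn a : Multiset ℕ).count y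

/-- `Fkd k d n` is the maximum cardinality of a set `A ⊆ {1,…,n}` such that there are no
`a_1 < a_2 < ⋯ < a_k` in `A` and positive integer `x` with `a_1 ⋯ a_k = x ^ d`. -/
noncomputable def Fkd (k d n : ℕ) : ℕ :=
  sSup {m : ℕ | ∃ A : Finset ℕ, A ⊆ Finset.Icc 1 n ∧ A.card = m ∧
    ∀ (a : Fin k → ℕ) (x : ℕ), (∀ i, a i ∈ A) → StrictMono a → 0 < x →
      (∏ i, a i) ≠ x ^ d}

/-- `fkd k d n` is the maximum cardinality of a set `A ⊆ {1,…,n}` such that whenever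
`a_1, …, a_k ∈ A` (not necessarily distinct) and `a_1 ⋯ a_k = x ^ d` for a positive integer
`x`, the multiset of the `a_i` is trivial. -/
noncomputable def fkd (k d n : ℕ) : ℕ :=
  sSup {m : ℕ | ∃ A : Finset ℕ, A ⊆ Finset.Icc 1 n ∧ A.card = m ∧
    ∀ (a : Fin k → ℕ) (x : ℕ), (∀ i, a i ∈ A) → 0 < x →
      (∏ i, a i) = x ^ d → TrivialSol d a}

namespace Nat

def mapExponents (g : ℕ → ℕ) (m : ℕ) : ℕ := m.factorization.prod fun p e => p ^ g e

theorem factorization_mapExponents {g : ℕ → ℕ} (hg : g 0 = 0) (m p : ℕ) :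
    (mapExponents g m).factorization p = g (m.factorization p) := by
  have h : mapExponents g m = (m.factorization.mapRange g hg).prod (· ^ ·) := by
    rw [mapExponents, Finsupp.prod_mapRange_index fun p => pow_zero p]
  rw [h, prod_pow_factorization_eq_self fun q hq =>
    prime_of_mem_primeFactors (Finsupp.support_mapRange hq)]
  rfl

theorem mapExponents_ne_zero (g : ℕ → ℕ) (m : ℕ) : mapExponents g m ≠ 0 :=
  Finsupp.prod_ne_zero_iff.2 fun _ hp => pow_ne_zero _ (prime_of_mem_primeFactors hp).ne_zero

end Nat

open Nat (mapExponents factorization_mapExponents mapExponents_ne_zero)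

/-- Writing `m = a ^ 2 * b * t ^ 3` with `a`, `b` squarefree and coprime, `sqPart m = a`,
`linPart m = b` and `cubePart m = t`. -/
def sqPart : ℕ → ℕ := mapExponents fun e => if e % 3 = 2 then 1 else 0

def linPart : ℕ → ℕ := mapExponents fun e => if e % 3 = 1 then 1 else 0

def cubePart : ℕ → ℕ := mapExponents (· / 3)

theorem factorization_sqPart (m p : ℕ) :
    (sqPart m).factorization p = if m.factorization p % 3 = 2 then 1 else 0 :=
  factorization_mapExponents (by simp) m p

theorem factorization_linPart (m p : ℕ) :
    (linPart m).factorization p = if m.factorization p % 3 = 1 then 1 else 0 :=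
  factorization_mapExponents (by simp) m p

theorem factorization_cubePart (m p : ℕ) :
    (cubePart m).factorization p = m.factorization p / 3 :=
  factorization_mapExponents (by simp) m p

theorem sqPart_sq_mul_linPart_mul_cubePart_pow {m : ℕ} (hm : m ≠ 0) :
    sqPart m ^ 2 * linPart m * cubePart m ^ 3 = m := by
  have ha : sqPart m ≠ 0 := mapExponents_ne_zero _ m
  have hb : linPart m ≠ 0 := mapExponents_ne_zero _ m
  have ht : cubePart m ≠ 0 := mapExponents_ne_zero _ m
  refine Nat.eq_of_factorization_eq (by positivity) hm fun p => ?_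
  rw [Nat.factorization_mul (by positivity) (pow_ne_zero _ ht),
    Nat.factorization_mul (pow_ne_zero _ ha) hb, Nat.factorization_pow, Nat.factorization_pow]
  simp only [Finsupp.add_apply, Finsupp.smul_apply, smul_eq_mul, factorization_sqPart,
    factorization_linPart, factorization_cubePart]
  split_ifs <;> omega

theorem linPart_eq_sqPart_of_mul_eq_pow_three {m m' x : ℕ} (hm : m ≠ 0) (hm' : m' ≠ 0)
    (h : m * m' = x ^ 3) : linPart m = sqPart m' := by
  have hx : ∀ p, m.factorization p + m'.factorization p = 3 * x.factorization p := fun p => by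
    simpa [Nat.factorization_mul hm hm'] using congrArg (·.factorization p) h
  refine Nat.eq_of_factorization_eq (mapExponents_ne_zero _ m) (mapExponents_ne_zero _ m')
    fun p => ?_
  rw [factorization_linPart, factorization_sqPart]
  have := hx p
  split_ifs <;> omega

def NoStrictPowerProduct (k d : ℕ) (A : Finset ℕ) : Prop :=
  ∀ (a : Fin k → ℕ) (x : ℕ), (∀ i, a i ∈ A) → StrictMono a → 0 < x → (∏ i, a i) ≠ x ^ d

def OnlyTrivialPowerProducts (k d : ℕ) (A : Finset ℕ) : Prop :=
  ∀ (a : Fin k → ℕ) (x : ℕ), (∀ i, a i ∈ A) → 0 < x → (∏ i, a i) = x ^ d → TrivialSol d a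

noncomputable def maxCard (n : ℕ) (P : Finset ℕ → Prop) : ℕ :=
  sSup {m : ℕ | ∃ A : Finset ℕ, A ⊆ Icc 1 n ∧ A.card = m ∧ P A}

section MaxCard

variable {k d n : ℕ} {A : Finset ℕ} {P : Finset ℕ → Prop}

theorem Fkd_eq_maxCard : Fkd k d n = maxCard n (NoStrictPowerProduct k d) := rfl

theorem fkd_eq_maxCard : fkd k d n = maxCard n (OnlyTrivialPowerProducts k d) := rfl

theorem bddAbove_setOf_card (n : ℕ) (P : Finset ℕ → Prop) :
    BddAbove {m : ℕ | ∃ A : Finset ℕ, A ⊆ Icc 1 n ∧ A.card = m ∧ P A} := by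
  refine ⟨n, ?_⟩
  rintro _ ⟨A, hA, rfl, -⟩
  simpa using card_le_card hA

theorem card_le_maxCard (hA : A ⊆ Icc 1 n) (hP : P A) : A.card ≤ maxCard n P :=
  le_csSup (bddAbove_setOf_card n P) ⟨A, hA, rfl, hP⟩

theorem exists_card_eq_maxCard (hP : P ∅) : ∃ A ⊆ Icc 1 n, P A ∧ A.card = maxCard n P := by
  have hmem : maxCard n P ∈ {m : ℕ | ∃ A : Finset ℕ, A ⊆ Icc 1 n ∧ A.card = m ∧ P A} :=
    Nat.sSup_mem ⟨0, ∅, empty_subset _, rfl, hP⟩ (bddAbove_setOf_card n P)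
  obtain ⟨A, hA, hcard, hPA⟩ := hmem
  exact ⟨A, hA, hPA, hcard⟩

end MaxCard

section PowerProducts

variable {k d : ℕ} {A : Finset ℕ}

theorem noStrictPowerProduct_empty (hk : k ≠ 0) : NoStrictPowerProduct k d ∅ :=
  fun _ _ ha => absurd (ha ⟨0, Nat.pos_of_ne_zero hk⟩) (notMem_empty _)

theorem onlyTrivialPowerProducts_empty (hk : k ≠ 0) : OnlyTrivialPowerProducts k d ∅ :=
  fun _ _ ha => absurd (ha ⟨0, Nat.pos_of_ne_zero hk⟩) (notMem_empty _)

theorem OnlyTrivialPowerProducts.noStrictPowerProduct (hk : k ≠ 0) (hd : d ≠ 1)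
    (hA : OnlyTrivialPowerProducts k d A) : NoStrictPowerProduct k d A := by
  intro a x ha hmono hx hprod
  have hcount : (List.ofFn a : Multiset ℕ).count (a ⟨0, Nat.pos_of_ne_zero hk⟩) = 1 :=
    Multiset.count_eq_one_of_mem (Multiset.coe_nodup.2 (List.nodup_ofFn.2 hmono.injective))
      (Multiset.mem_coe.2 (List.mem_ofFn.2 ⟨_, rfl⟩))
  exact hd (Nat.dvd_one.1 (hcount ▸ hA a x ha hx hprod _))

theorem fkd_le_Fkd (n : ℕ) (hk : k ≠ 0) (hd : d ≠ 1) : fkd k d n ≤ Fkd k d n := by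
  obtain ⟨A, hA, htriv, hcard⟩ :=
    exists_card_eq_maxCard (n := n) (onlyTrivialPowerProducts_empty (d := d) hk)
  rw [fkd_eq_maxCard, ← hcard]
  exact card_le_maxCard hA (htriv.noStrictPowerProduct hk hd)

theorem NoStrictPowerProduct.mul_ne_pow (hA : NoStrictPowerProduct 2 d A) {u v x : ℕ}
    (hu : u ∈ A) (hv : v ∈ A) (huv : u ≠ v) (hx : 0 < x) : u * v ≠ x ^ d := by
  wlog hlt : u < v generalizing u v
  · rw [mul_comm]
    exact this hv hu huv.symm (huv.lt_or_gt.resolve_left hlt)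
  have := hA ![u, v] x (fun i => by fin_cases i <;> assumption)
    (Fin.strictMono_iff_lt_succ.2 fun i => by fin_cases i; exact hlt) hx
  simpa using this

end PowerProducts

theorem Squarefree.sq_mul_injective {a b a' b' : ℕ} (ha : Squarefree a) (hb : Squarefree b)
    (ha' : Squarefree a') (hb' : Squarefree b') (h : a ^ 2 * b = a' ^ 2 * b') :
    a = a' ∧ b = b' := by
  have hp : ∀ p, 2 * a.factorization p + b.factorization p =
      2 * a'.factorization p + b'.factorization p := fun p => by
    simpa [Nat.factorization_mul, ha.ne_zero, hb.ne_zero, ha'.ne_zero, hb'.ne_zero]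
      using congrArg (·.factorization p) h
  have hle : ∀ p, a.factorization p ≤ 1 ∧ b.factorization p ≤ 1 ∧
      a'.factorization p ≤ 1 ∧ b'.factorization p ≤ 1 := fun p =>
    ⟨ha.natFactorization_le_one p, hb.natFactorization_le_one p,
      ha'.natFactorization_le_one p, hb'.natFactorization_le_one p⟩
  constructor
  · refine Nat.eq_of_factorization_eq ha.ne_zero ha'.ne_zero fun p => ?_
    have := hp p; have := hle p; omega
  · refine Nat.eq_of_factorization_eq hb.ne_zero hb'.ne_zero fun p => ?_
    have := hp p; have := hle p; omega

theorem card_offDiag_le_two_mul_card_sdiff {A B S : Finset ℕ}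
    (hA : NoStrictPowerProduct 2 3 A) (hS : ∀ a ∈ S, Squarefree a)
    (hB : ∀ a ∈ S, ∀ b ∈ S, a ^ 2 * b ∈ B) :
    S.offDiag.card ≤ 2 * (B \ A).card := by
  set inA := S.offDiag.filter fun p => p.1 ^ 2 * p.2 ∈ A
  set notInA := S.offDiag.filter fun p => p.1 ^ 2 * p.2 ∉ A
  -- `a ^ 2 * b` and `b ^ 2 * a` are distinct with product `(a * b) ^ 3`, so `A` misses one.
  have hswap : inA.card ≤ notInA.card := by
    refine card_le_card_of_injOn Prod.swap (fun p hp => ?_) Prod.swap_injective.injOn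
    obtain ⟨⟨ha, hb, hab⟩, hpA⟩ := by simpa [inA] using hp
    refine mem_filter.2 ⟨mem_offDiag.2 ⟨hb, ha, Ne.symm hab⟩, fun hpA' => ?_⟩
    rw [Prod.fst_swap, Prod.snd_swap] at hpA'
    have hne : p.1 ^ 2 * p.2 ≠ p.2 ^ 2 * p.1 := fun h =>
      hab ((Squarefree.sq_mul_injective (hS _ ha) (hS _ hb) (hS _ hb) (hS _ ha) h).1)
    refine hA.mul_ne_pow hpA hpA' hne (x := p.1 * p.2)
      (Nat.pos_of_ne_zero (mul_ne_zero (hS _ ha).ne_zero (hS _ hb).ne_zero)) (by ring)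
  have hsq : notInA.card ≤ (B \ A).card := by
    refine card_le_card_of_injOn (fun p => p.1 ^ 2 * p.2) (fun p hp => ?_)
      fun p hp q hq h => ?_
    · obtain ⟨⟨ha, hb, -⟩, hpA⟩ := by simpa [notInA] using hp
      exact mem_sdiff.2 ⟨hB _ ha _ hb, hpA⟩
    · obtain ⟨⟨hpa, hpb, -⟩, -⟩ := by simpa [notInA] using hp
      obtain ⟨⟨hqa, hqb, -⟩, -⟩ := by simpa [notInA] using hq
      obtain ⟨h1, h2⟩ :=
        Squarefree.sq_mul_injective (hS _ hpa) (hS _ hpb) (hS _ hqa) (hS _ hqb) h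
      exact Prod.ext h1 h2
  have : inA.card + notInA.card = S.offDiag.card := card_filter_add_card_filter_not _
  omega

theorem sum_inv_sq_Icc_two_le (N : ℕ) : ∑ k ∈ Icc 2 N, ((k : ℝ) ^ 2)⁻¹ ≤ 11 / 12 := by
  calc ∑ k ∈ Icc 2 N, ((k : ℝ) ^ 2)⁻¹
      ≤ ∑ k ∈ insert 2 (Ioo 2 (N + 1)), ((k : ℝ) ^ 2)⁻¹ :=
        sum_le_sum_of_subset_of_nonneg (fun k hk => by simp at hk ⊢; omega)
          fun _ _ _ => by positivity
    _ = 1 / 4 + ∑ k ∈ Ioo 2 (N + 1), ((k : ℝ) ^ 2)⁻¹ := by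
        rw [sum_insert (by simp)]; norm_num
    _ ≤ 1 / 4 + 2 / (2 + 1) := by gcongr; exact_mod_cast sum_Ioo_inv_sq_le 2 (N + 1)
    _ = 11 / 12 := by norm_num

theorem card_filter_not_squarefree_le (N : ℕ) :
    #{m ∈ Icc 1 N | ¬Squarefree m} ≤ ∑ k ∈ Icc 2 N, N / k ^ 2 := by
  calc #{m ∈ Icc 1 N | ¬Squarefree m}
      ≤ #((Icc 2 N).biUnion fun k => {m ∈ Ioc 0 N | k ^ 2 ∣ m}) := by
        refine card_le_card fun m hm => ?_
        obtain ⟨⟨hm1, hmN⟩, hsq⟩ : (1 ≤ m ∧ m ≤ N) ∧ ¬Squarefree m := by simpa using hm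
        obtain ⟨k, hk, hunit⟩ : ∃ k, k * k ∣ m ∧ ¬IsUnit k := by
          simpa [Squarefree] using hsq
        have hk0 : k ≠ 0 := by rintro rfl; simp at hk; omega
        have hkm : k * k ≤ m := Nat.le_of_dvd (by omega) hk
        simp only [mem_biUnion, mem_Icc, mem_filter, mem_Ioc]
        exact ⟨k, ⟨by simp at hunit; omega, by nlinarith⟩, ⟨by omega, hmN⟩, by rwa [sq]⟩
    _ ≤ ∑ k ∈ Icc 2 N, N / k ^ 2 := card_biUnion_le.trans_eq <|
        sum_congr rfl fun k _ => Nat.Ioc_filter_dvd_card_eq_div N (k ^ 2)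

theorem le_twelve_mul_card_filter_squarefree (N : ℕ) :
    N ≤ 12 * #{m ∈ Icc 1 N | Squarefree m} := by
  have hsplit : #{m ∈ Icc 1 N | Squarefree m} + #{m ∈ Icc 1 N | ¬Squarefree m} = N := by
    rw [card_filter_add_card_filter_not, Nat.card_Icc, Nat.add_sub_cancel]
  have hnot : (#{m ∈ Icc 1 N | ¬Squarefree m} : ℝ) ≤ 11 / 12 * N :=
    calc (#{m ∈ Icc 1 N | ¬Squarefree m} : ℝ) ≤ ∑ k ∈ Icc 2 N, ((N / k ^ 2 : ℕ) : ℝ) := by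
          exact_mod_cast card_filter_not_squarefree_le N
      _ ≤ ∑ k ∈ Icc 2 N, N * ((k : ℝ) ^ 2)⁻¹ := by
          gcongr with k
          exact Nat.cast_div_le.trans_eq (by push_cast; ring)
      _ ≤ 11 / 12 * N := by
          rw [← mul_sum]; nlinarith [sum_inv_sq_Icc_two_le N, (N.cast_nonneg : (0 : ℝ) ≤ N)]
  have : (N : ℝ) = #{m ∈ Icc 1 N | Squarefree m} + #{m ∈ Icc 1 N | ¬Squarefree m} := by
    exact_mod_cast hsplit.symm
  exact_mod_cast (by linarith : (N : ℝ) ≤ 12 * #{m ∈ Icc 1 N | Squarefree m})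

theorem sq_card_add_two_mul_Fkd_le {n K : ℕ} (hK : K ^ 3 ≤ n) {S : Finset ℕ}
    (hSK : S ⊆ Icc 1 K) (hS : ∀ a ∈ S, Squarefree a) :
    #S ^ 2 + 2 * Fkd 2 3 n ≤ 2 * n + #S := by
  obtain ⟨A, hAn, hA, hcard⟩ :=
    exists_card_eq_maxCard (n := n) (noStrictPowerProduct_empty (d := 3) two_ne_zero)
  have hB : ∀ a ∈ S, ∀ b ∈ S, a ^ 2 * b ∈ Icc 1 n := by
    intro a ha b hb
    have ha' := mem_Icc.1 (hSK ha)
    have hb' := mem_Icc.1 (hSK hb)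
    refine mem_Icc.2
      ⟨Nat.one_le_iff_ne_zero.2 (mul_ne_zero (pow_ne_zero _ (by omega)) (by omega)), ?_⟩
    calc a ^ 2 * b ≤ K ^ 2 * K := by gcongr <;> omega
      _ = K ^ 3 := by ring
      _ ≤ n := hK
  have hoff := card_offDiag_le_two_mul_card_sdiff hA hS hB
  rw [offDiag_card, card_sdiff_of_subset hAn, Nat.card_Icc] at hoff
  have hAn' : #A ≤ n := by simpa using card_le_card hAn
  have hSS : #S ≤ #S * #S := Nat.le_mul_self _
  rw [Fkd_eq_maxCard, ← hcard, sq]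
  omega

theorem sq_div_lt_sub_Fkd_two_three {n : ℕ} {s : ℝ} (hs : s ^ 3 = n) (h25 : 25 ≤ s) :
    s ^ 2 / 2304 < n - Fkd 2 3 n := by
  set K := ⌊s⌋₊
  have hKs : (K : ℝ) ≤ s := Nat.floor_le (by linarith)
  have hsK : s < K + 1 := Nat.lt_floor_add_one s
  have hK25 : (25 : ℝ) ≤ K := by exact_mod_cast Nat.le_floor (by exact_mod_cast h25)
  have hK3 : K ^ 3 ≤ n := by
    exact_mod_cast (pow_le_pow_left₀ (Nat.cast_nonneg K) hKs 3).trans hs.le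
  set S := {m ∈ Icc 1 K | Squarefree m}
  have hKS : (K : ℝ) ≤ 12 * #S := by exact_mod_cast le_twelve_mul_card_filter_squarefree K
  have hmain : (#S : ℝ) ^ 2 + 2 * Fkd 2 3 n ≤ 2 * n + #S := by
    exact_mod_cast sq_card_add_two_mul_Fkd_le hK3 (filter_subset _ _)
      fun a ha => (mem_filter.1 ha).2
  -- `s < 12 #S + 1`, `#S ≥ 25 / 12`, and `(12 x + 1) ^ 2 ≤ 1152 (x ^ 2 - x)` for `x ≥ 2`
  nlinarith [mul_pos (by linarith : (0 : ℝ) < 12 * #S + 1 - s)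
    (by linarith : (0 : ℝ) < 12 * #S + 1 + s)]

theorem not_mul_eq_pow_three_of_sqPart_lt_linPart {m m' x : ℕ} (hm : m ≠ 0) (hm' : m' ≠ 0)
    (h : sqPart m < linPart m) (h' : sqPart m' < linPart m') : m * m' ≠ x ^ 3 := fun hx => by
  have e := linPart_eq_sqPart_of_mul_eq_pow_three hm hm' hx
  have e' := linPart_eq_sqPart_of_mul_eq_pow_three hm' hm ((mul_comm m' m).trans hx)
  omega

theorem onlyTrivialPowerProducts_sqPart_lt_linPart (n : ℕ) :
    OnlyTrivialPowerProducts 2 3 {m ∈ Icc 1 n | sqPart m < linPart m} := by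
  intro a x ha _ hprod
  have h0 := mem_filter.1 (ha 0)
  have h1 := mem_filter.1 (ha 1)
  rw [Fin.prod_univ_two] at hprod
  exact absurd hprod (not_mul_eq_pow_three_of_sqPart_lt_linPart
    (by have := (mem_Icc.1 h0.1).1; omega) (by have := (mem_Icc.1 h1.1).1; omega) h0.2 h1.2)

theorem exists_sq_mul_eq_of_linPart_le_sqPart {m : ℕ} (hm : m ≠ 0)
    (h : linPart m ≤ sqPart m) : ∃ u v, v ≤ u ∧ u ^ 2 * v = m :=
  ⟨sqPart m * cubePart m, linPart m * cubePart m, Nat.mul_le_mul_right _ h,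
    (by ring : _ = sqPart m ^ 2 * linPart m * cubePart m ^ 3).trans
      (sqPart_sq_mul_linPart_mul_cubePart_pow hm)⟩

theorem card_filter_sq_mul_le (n K : ℕ) :
    (#{p ∈ Icc 1 n ×ˢ Icc 1 n | p.2 ≤ p.1 ∧ p.1 ^ 2 * p.2 ≤ n} : ℝ) ≤
      K ^ 2 + 2 * n / (K + 1) := by
  have hsub : {p ∈ Icc 1 n ×ˢ Icc 1 n | p.2 ≤ p.1 ∧ p.1 ^ 2 * p.2 ≤ n} ⊆
      Icc 1 K ×ˢ Icc 1 K ∪ (Ioo K (n + 1)).biUnion fun u => {u} ×ˢ Icc 1 (n / u ^ 2) := by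
    rintro ⟨u, v⟩ hp
    simp only [mem_filter, mem_product, mem_Icc] at hp
    obtain ⟨⟨⟨hu1, hun⟩, hv1, -⟩, hvu, huv⟩ := hp
    simp only [mem_union, mem_product, mem_Icc, mem_biUnion, mem_Ioo, mem_singleton]
    by_cases huK : u ≤ K
    · exact Or.inl ⟨⟨hu1, huK⟩, hv1, hvu.trans huK⟩
    · exact Or.inr ⟨u, ⟨by omega, by omega⟩, rfl, hv1,
        (Nat.le_div_iff_mul_le (by positivity)).2 (by linarith)⟩
  have hcard : #{p ∈ Icc 1 n ×ˢ Icc 1 n | p.2 ≤ p.1 ∧ p.1 ^ 2 * p.2 ≤ n} ≤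
      K ^ 2 + ∑ u ∈ Ioo K (n + 1), n / u ^ 2 := by
    refine (card_le_card hsub).trans ((card_union_le _ _).trans (add_le_add ?_ ?_))
    · simp [sq]
    · exact card_biUnion_le.trans_eq (sum_congr rfl fun u _ => by simp)
  calc (#{p ∈ Icc 1 n ×ˢ Icc 1 n | p.2 ≤ p.1 ∧ p.1 ^ 2 * p.2 ≤ n} : ℝ)
      ≤ K ^ 2 + ∑ u ∈ Ioo K (n + 1), ((n / u ^ 2 : ℕ) : ℝ) := by exact_mod_cast hcard
    _ ≤ K ^ 2 + ∑ u ∈ Ioo K (n + 1), n * ((u : ℝ) ^ 2)⁻¹ := by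
        gcongr with u
        exact Nat.cast_div_le.trans_eq (by push_cast; ring)
    _ ≤ K ^ 2 + n * (2 / (K + 1)) := by
        rw [← mul_sum]
        gcongr
        exact sum_Ioo_inv_sq_le K (n + 1)
    _ = K ^ 2 + 2 * n / (K + 1) := by ring

theorem card_filter_linPart_le_sqPart_le (n : ℕ) :
    #{m ∈ Icc 1 n | ¬sqPart m < linPart m} ≤
      #{p ∈ Icc 1 n ×ˢ Icc 1 n | p.2 ≤ p.1 ∧ p.1 ^ 2 * p.2 ≤ n} := by
  refine (card_le_card fun m hm => ?_).trans (card_image_le (f := fun p => p.1 ^ 2 * p.2))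
  obtain ⟨⟨hm1, hmn⟩, h⟩ : (1 ≤ m ∧ m ≤ n) ∧ linPart m ≤ sqPart m := by simpa using hm
  obtain ⟨u, v, hvu, rfl⟩ := exists_sq_mul_eq_of_linPart_le_sqPart (by omega) h
  have hu : 1 ≤ u := Nat.one_le_iff_ne_zero.2 fun hu => by simp [hu] at hm1
  have hv : 1 ≤ v := Nat.one_le_iff_ne_zero.2 fun hv => by simp [hv] at hm1
  simp only [mem_image, mem_filter, mem_product, mem_Icc, Prod.exists]
  exact ⟨u, v, ⟨⟨⟨hu, by nlinarith⟩, hv, by nlinarith⟩, hvu, hmn⟩, rfl⟩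

theorem sub_fkd_two_three_lt {n : ℕ} {s : ℝ} (hs : s ^ 3 = n) (hs0 : 0 < s) :
    n - fkd 2 3 n < 4 * s ^ 2 := by
  set K := ⌊s⌋₊
  have hKs : (K : ℝ) ≤ s := Nat.floor_le hs0.le
  have hsK : s < K + 1 := Nat.lt_floor_add_one s
  have hsplit := card_filter_add_card_filter_not (s := Icc 1 n) fun m => sqPart m < linPart m
  rw [Nat.card_Icc, Nat.add_sub_cancel] at hsplit
  have hA := card_le_maxCard (filter_subset _ _) (onlyTrivialPowerProducts_sqPart_lt_linPart n)
  rw [← fkd_eq_maxCard] at hA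
  have hR := (Nat.cast_le (α := ℝ)).2 (card_filter_linPart_le_sqPart_le n) |>.trans
    (card_filter_sq_mul_le n K)
  have hdiv : 2 * (n : ℝ) / (K + 1) ≤ 2 * s ^ 2 := by
    rw [div_le_iff₀ (by positivity), ← hs]
    nlinarith [sq_nonneg s]
  have : (n : ℝ) ≤ fkd 2 3 n + #{m ∈ Icc 1 n | ¬sqPart m < linPart m} := by
    exact_mod_cast hsplit ▸ Nat.add_le_add_right hA _
  nlinarith [pow_le_pow_left₀ (Nat.cast_nonneg K) hKs 2]

theorem stmt_0 : ∃ c1 c2 : ℝ, 0 < c1 ∧ 0 < c2 ∧ ∀ᶠ n : ℕ in Filter.atTop,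
    c1 * (n : ℝ) ^ ((2 : ℝ)/3) < (n : ℝ) - (Fkd 2 3 n : ℝ) ∧
    (n : ℝ) - (Fkd 2 3 n : ℝ) ≤ (n : ℝ) - (fkd 2 3 n : ℝ) ∧
    (n : ℝ) - (fkd 2 3 n : ℝ) < c2 * (n : ℝ) ^ ((2 : ℝ)/3) := by
  refine ⟨1 / 2304, 4, by norm_num, by norm_num, ?_⟩
  filter_upwards [eventually_ge_atTop (25 ^ 3)] with n hn
  set s := (n : ℝ) ^ ((1 : ℝ) / 3)
  have hs : s ^ 3 = n := by
    rw [← Real.rpow_natCast, ← Real.rpow_mul n.cast_nonneg]; norm_num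
  have hs2 : (n : ℝ) ^ ((2 : ℝ) / 3) = s ^ 2 := by
    rw [← Real.rpow_natCast, ← Real.rpow_mul n.cast_nonneg]; norm_num
  have h25 : 25 ≤ s :=
    le_of_pow_le_pow_left₀ three_ne_zero (by positivity) (by rw [hs]; exact_mod_cast hn)
  have hfF : (fkd 2 3 n : ℝ) ≤ Fkd 2 3 n := by
    exact_mod_cast fkd_le_Fkd n two_ne_zero (by norm_num)
  rw [hs2]
  exact ⟨by linarith [sq_div_lt_sub_Fkd_two_three hs h25], by linarith,
    sub_fkd_two_three_lt hs (by linarith)⟩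
end

section
/- For every positive integer n, F_{2,3}(n) = f_{2,3}(n) + 1. -/
open Finset Filter

/-- A multiset of size two cannot be split into groups of three equal elements. -/
lemma notTriv (a : Fin 2 → ℕ) : ¬ TrivialSol 3 a := by
  intro h
  have h0 := h (a 0)
  have hl : List.ofFn a = [a 0, a 1] := by simp [List.ofFn_succ]
  rw [hl] at h0
  by_cases hab : a 0 = a 1 <;> simp [List.count_cons, hab] at h0 <;> omega

lemma strictMono_pair {b c : ℕ} (h : b < c) : StrictMono ![b, c] := by
  rw [Fin.strictMono_iff_lt_succ]
  intro i
  fin_cases i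
  simpa using h

lemma cube_of_sq_eq_cube {a x : ℕ} (ha : a ≠ 0) (h : a ^ 2 = x ^ 3) : ∃ t, a = t ^ 3 := by
  have hx : x ≠ 0 := by rintro rfl; simp at h; omega
  have hf : ∀ p, 3 ∣ a.factorization p := by
    intro p
    have := congrArg (fun m => Nat.factorization m p) h
    simp [Nat.factorization_pow] at this
    omega
  refine ⟨a.factorization.prod fun p k => p ^ (k / 3), ?_⟩
  conv_lhs => rw [← Nat.factorization_prod_pow_eq_self ha]
  rw [Finsupp.prod, Finsupp.prod, ← Finset.prod_pow]
  refine Finset.prod_congr rfl fun p hp => ?_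
  rw [← pow_mul, Nat.div_mul_cancel (hf p)]

theorem stmt_1 (n : ℕ) (hn : 1 ≤ n) : Fkd 2 3 n = fkd 2 3 n + 1 := by
  classical
  set SF := {m : ℕ | ∃ A : Finset ℕ, A ⊆ Finset.Icc 1 n ∧ A.card = m ∧
    ∀ (a : Fin 2 → ℕ) (x : ℕ), (∀ i, a i ∈ A) → StrictMono a → 0 < x →
      (∏ i, a i) ≠ x ^ 3} with hSF
  set Sf := {m : ℕ | ∃ A : Finset ℕ, A ⊆ Finset.Icc 1 n ∧ A.card = m ∧
    ∀ (a : Fin 2 → ℕ) (x : ℕ), (∀ i, a i ∈ A) → 0 < x →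
      (∏ i, a i) = x ^ 3 → TrivialSol 3 a} with hSf
  have hFkd : Fkd 2 3 n = sSup SF := rfl
  have hfkd : fkd 2 3 n = sSup Sf := rfl
  -- boundedness
  have hbF : ∀ m ∈ SF, m ≤ n := by
    rintro m ⟨A, hA, rfl, -⟩
    calc A.card ≤ (Finset.Icc 1 n).card := Finset.card_le_card hA
    _ = n := by rw [Nat.card_Icc]; omega
  have hbf : ∀ m ∈ Sf, m ≤ n := by
    rintro m ⟨A, hA, rfl, -⟩
    calc A.card ≤ (Finset.Icc 1 n).card := Finset.card_le_card hA
    _ = n := by rw [Nat.card_Icc]; omega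
  -- nonemptiness
  have h0F : (0 : ℕ) ∈ SF := ⟨∅, by simp, by simp, fun a x hi _ _ => absurd (hi 0) (by simp)⟩
  have h0f : (0 : ℕ) ∈ Sf := ⟨∅, by simp, by simp, fun a x hi _ _ => absurd (hi 0) (by simp)⟩
  have hFmem : sSup SF ∈ SF := Nat.sSup_mem ⟨0, h0F⟩ ⟨n, hbF⟩
  have hfmem : sSup Sf ∈ Sf := Nat.sSup_mem ⟨0, h0f⟩ ⟨n, hbf⟩
  rw [hFkd, hfkd]
  refine le_antisymm ?_ ?_
  · -- sSup SF ≤ sSup Sf + 1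
    obtain ⟨A, hA, hcard, hF⟩ := hFmem
    set B := A.filter (fun b => ¬ ∃ t, b = t ^ 3) with hB
    have hpos : ∀ b ∈ A, 1 ≤ b := fun b hb => (Finset.mem_Icc.mp (hA hb)).1
    -- at most one cube in A
    have hone : (A.filter (fun b => ∃ t, b = t ^ 3)).card ≤ 1 := by
      rw [Finset.card_le_one]
      intro b hb c hc
      rw [Finset.mem_filter] at hb hc
      obtain ⟨hbA, t, rfl⟩ := hb
      obtain ⟨hcA, s, rfl⟩ := hc
      by_contra hne
      have ht : t ≠ 0 := by rintro rfl; have := hpos _ hbA; simp at this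
      have hs : s ≠ 0 := by rintro rfl; have := hpos _ hcA; simp at this
      rcases lt_or_gt_of_ne hne with h | h
      · exact hF ![t ^ 3, s ^ 3] (t * s)
          (fun i => by fin_cases i <;> simp [hbA, hcA])
          (strictMono_pair h) (by positivity) (by rw [Fin.prod_univ_two, mul_pow]; simp)
      · exact hF ![s ^ 3, t ^ 3] (t * s)
          (fun i => by fin_cases i <;> simp [hbA, hcA])
          (strictMono_pair h) (by positivity) (by rw [Fin.prod_univ_two]; simp [mul_pow]; ring)
    have hBcard : A.card ≤ B.card + 1 := by
      have := Finset.card_filter_add_card_filter_not (s := A)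
        (p := fun b => ∃ t, b = t ^ 3)
      have hBe : B.card = (A.filter (fun b => ¬ ∃ t, b = t ^ 3)).card := rfl
      omega
    have hBmem : B.card ∈ Sf := by
      refine ⟨B, (Finset.filter_subset _ _).trans hA, rfl, fun a x hi hx heq => ?_⟩
      exfalso
      have hiA : ∀ i, a i ∈ A := fun i => Finset.filter_subset _ _ (hi i)
      rw [Fin.prod_univ_two] at heq
      rcases lt_trichotomy (a 0) (a 1) with h | h | h
      · exact hF a x hiA
          (by rw [Fin.strictMono_iff_lt_succ]; intro i; fin_cases i; simpa using h)
          hx (by rw [Fin.prod_univ_two]; exact heq)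
      · have ha0 : a 0 ≠ 0 := by have := hpos _ (hiA 0); omega
        have : a 0 ^ 2 = x ^ 3 := by rw [pow_two]; rw [← h] at heq; exact heq
        obtain ⟨t, ht⟩ := cube_of_sq_eq_cube ha0 this
        have := (Finset.mem_filter.mp (hi 0)).2
        exact this ⟨t, ht⟩
      · exact hF ![a 1, a 0] x (fun i => by fin_cases i <;> simp [hiA 0, hiA 1])
          (strictMono_pair h) hx
          (by rw [Fin.prod_univ_two]; simpa [mul_comm] using heq)
    have := le_csSup ⟨n, hbf⟩ hBmem
    omega
  · -- sSup Sf + 1 ≤ sSup SF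
    obtain ⟨A, hA, hcard, hf⟩ := hfmem
    have hpos : ∀ b ∈ A, 1 ≤ b := fun b hb => (Finset.mem_Icc.mp (hA hb)).1
    have hnocube : ∀ b ∈ A, ∀ x : ℕ, 0 < x → b ≠ x ^ 3 := by
      rintro b hb x hx rfl
      refine notTriv ![x ^ 3, x ^ 3] (hf ![x ^ 3, x ^ 3] (x ^ 2)
        (fun i => by fin_cases i <;> simpa using hb) (by positivity) ?_)
      rw [Fin.prod_univ_two]
      simp [← pow_add, ← pow_mul]
    have h1A : 1 ∉ A := fun h1 => hnocube 1 h1 1 one_pos (by norm_num)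
    have hins : (insert 1 A).card = A.card + 1 := Finset.card_insert_of_notMem h1A
    have hmem : A.card + 1 ∈ SF := by
      refine ⟨insert 1 A, ?_, hins, fun a x hi hsm hx heq => ?_⟩
      · intro b hb
        rcases Finset.mem_insert.mp hb with rfl | hb
        · exact Finset.mem_Icc.mpr ⟨le_refl 1, hn⟩
        · exact hA hb
      · have h01 : a 0 < a 1 := hsm (by norm_num : (0 : Fin 2) < 1)
        have hle : ∀ i, 1 ≤ a i := by
          intro i
          rcases Finset.mem_insert.mp (hi i) with h | h
          · omega
          · exact hpos _ h
        have ha1 : a 1 ∈ A := by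
          rcases Finset.mem_insert.mp (hi 1) with h | h
          · have := hle 0; omega
          · exact h
        rw [Fin.prod_univ_two] at heq
        rcases Finset.mem_insert.mp (hi 0) with h | h
        · rw [h, one_mul] at heq
          exact hnocube _ ha1 x hx heq
        · exact notTriv a (hf a x (fun i => by
            have h2 : a i = a 0 ∨ a i = a 1 := by fin_cases i <;> simp
            rcases h2 with h' | h' <;> rw [h']
            · exact h
            · exact ha1) hx (by rw [Fin.prod_univ_two]; exact heq))
    have := le_csSup ⟨n, hbF⟩ hmem
    omega
end

section
/- There exists a constant c > 0 such that for every sufficiently large positive integer n there is a bipartite simple graph G with parts S and T of size n each (all edges of G join a vertex of S to a vertex of T), such that G contains no copy of K_{3,3} (i.e., there are no three vertices in S and three vertices in T that are pairwise joined by edges of G), and the number of edges of G is greater than c·n^{5/3}. -/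
/-!
Brown's construction. Fix an odd prime `q` and `δ ∈ 𝔽_q` with `-δ` a nonsquare, and join
`x, y ∈ 𝔽_q³` when `(x - y) ⬝ (x - y) = δ`. If a line met such a sphere in three points, the
restriction of the quadratic form to the line would vanish identically, making the direction
isotropic and orthogonal to the radius, which forces `-δ` to be a square. Now let `x, y, z` be
common neighbours of `a, b, c`. Subtracting sphere equations shows `y - x` and `z - x` are
orthogonal to `b - a` and `c - a`; so either `a, b, c` are collinear (on a sphere around `x`),
or `x, y, z` lie on a line along `(b - a) × (c - a)` (on a sphere around `a`). Each sphere has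
about `q²` points, so the graph has about `q⁵ ≍ n^{5/3}` edges, and Bertrand's postulate
supplies a prime with `q³ ≤ n < 8 q³`.
-/

open Finset Function Matrix Polynomial Filter

namespace Brown

def K33Free {α β : Type*} (R : α → β → Prop) : Prop :=
  ¬ ∃ u1 u2 u3 : α, ∃ v1 v2 v3 : β,
    u1 ≠ u2 ∧ u1 ≠ u3 ∧ u2 ≠ u3 ∧ v1 ≠ v2 ∧ v1 ≠ v3 ∧ v2 ≠ v3 ∧
    ∀ u ∈ ({u1, u2, u3} : Set α), ∀ v ∈ ({v1, v2, v3} : Set β), R u v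

theorem K33Free.map {α β γ δ : Type*} {R : α → β → Prop} (hR : K33Free R) {f : α → γ} {g : β → δ}
    (hf : Injective f) (hg : Injective g) : K33Free (Relation.Map R f g) := by
  rintro ⟨u1, u2, u3, v1, v2, v3, hu12, hu13, hu23, hv12, hv13, hv23, hmap⟩
  have hl (u) (hu : u ∈ ({u1, u2, u3} : Set γ)) : u ∈ Set.range f :=
    let ⟨a, _, _, ha, _⟩ := hmap u hu v1 (by simp); ⟨a, ha⟩
  have hr (v) (hv : v ∈ ({v1, v2, v3} : Set δ)) : v ∈ Set.range g :=
    let ⟨_, b, _, _, hb⟩ := hmap u1 (by simp) v hv; ⟨b, hb⟩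
  obtain ⟨x1, rfl⟩ := hl u1 (by simp)
  obtain ⟨x2, rfl⟩ := hl u2 (by simp)
  obtain ⟨x3, rfl⟩ := hl u3 (by simp)
  obtain ⟨y1, rfl⟩ := hr v1 (by simp)
  obtain ⟨y2, rfl⟩ := hr v2 (by simp)
  obtain ⟨y3, rfl⟩ := hr v3 (by simp)
  refine hR ⟨x1, x2, x3, y1, y2, y3, ne_of_apply_ne f hu12, ne_of_apply_ne f hu13,
    ne_of_apply_ne f hu23, ne_of_apply_ne g hv12, ne_of_apply_ne g hv13, ne_of_apply_ne g hv23, ?_⟩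
  simp only [Set.mem_insert_iff, Set.mem_singleton_iff, forall_eq_or_imp, forall_eq] at hmap ⊢
  simpa only [Relation.map_apply_apply hf hg] using hmap

section Geometry

variable {F : Type*} [Field F]

def qdist (x y : Fin 3 → F) : F := (x - y) ⬝ᵥ (x - y)

lemma qdist_comm (x y : Fin 3 → F) : qdist x y = qdist y x := by
  rw [qdist, qdist, ← neg_sub, neg_dotProduct_neg]

lemma dotProduct_self_add_smul (p d : Fin 3 → F) (t : F) :
    (p + t • d) ⬝ᵥ (p + t • d) = p ⬝ᵥ p + t * (2 * (p ⬝ᵥ d) + t * (d ⬝ᵥ d)) := by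
  simp only [add_dotProduct, dotProduct_add, smul_dotProduct, dotProduct_smul, smul_eq_mul,
    dotProduct_comm d p]
  ring

lemma isSquare_neg_dotProduct_self_of_isotropic {w z : Fin 3 → F} (hw : w ≠ 0)
    (hww : w ⬝ᵥ w = 0) (hzw : z ⬝ᵥ w = 0) : IsSquare (-(z ⬝ᵥ z)) := by
  have key : ∀ i, (z ⨯₃ w) i ^ 2 = -(z ⬝ᵥ z) * w i ^ 2 := by
    simp only [vec3_dotProduct] at hww hzw ⊢
    intro i
    fin_cases i <;> simp only [Fin.zero_eta, Fin.mk_one, Fin.reduceFinMk, Fin.isValue, cross_apply,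
      cons_val_zero, cons_val_one, Matrix.cons_val]
    · linear_combination (z 1 ^ 2 + z 2 ^ 2) * hww + (z 0 * w 0 - z 1 * w 1 - z 2 * w 2) * hzw
    · linear_combination (z 0 ^ 2 + z 2 ^ 2) * hww + (z 1 * w 1 - z 0 * w 0 - z 2 * w 2) * hzw
    · linear_combination (z 0 ^ 2 + z 1 ^ 2) * hww + (z 2 * w 2 - z 0 * w 0 - z 1 * w 1) * hzw
  obtain ⟨i, hi⟩ := Function.ne_iff.mp hw
  rw [Pi.zero_apply] at hi
  refine ⟨(z ⨯₃ w) i / w i, ?_⟩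
  field_simp
  linear_combination -(key i)

variable {δ : F}

theorem sub_ne_smul_sub_of_qdist_eq (h2 : (2 : F) ≠ 0) (hδ : ¬IsSquare (-δ))
    {s u v w : Fin 3 → F} (huv : u ≠ v) (huw : u ≠ w) (hvw : v ≠ w)
    (hu : qdist u s = δ) (hv : qdist v s = δ) (hw : qdist w s = δ) (μ : F) :
    w - u ≠ μ • (v - u) := by
  intro hμ
  have hμ0 : μ ≠ 0 := by
    rintro rfl
    exact huw (sub_eq_zero.mp (by simpa using hμ)).symm
  have hμ1 : μ ≠ 1 := by
    rintro rfl
    exact hvw (by simpa using hμ.symm)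
  rw [qdist, show v - s = (u - s) + (1 : F) • (v - u) by rw [one_smul]; abel,
    dotProduct_self_add_smul] at hv
  rw [qdist, show w - s = (u - s) + μ • (v - u) by rw [← hμ]; abel,
    dotProduct_self_add_smul] at hw
  rw [qdist] at hu
  set p := u - s
  set d := v - u
  -- the quadratic `t ↦ qdist (u + t • d) s - δ` vanishes at `t = 0, 1, μ`
  have hdd : d ⬝ᵥ d = 0 := by
    have : μ * (μ - 1) * (d ⬝ᵥ d) = 0 := by
      linear_combination hw - μ * hv + (μ - 1) * hu
    simpa [hμ0, sub_eq_zero, hμ1] using this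
  have hpd : p ⬝ᵥ d = 0 := by
    have : 2 * (p ⬝ᵥ d) = 0 := by
      linear_combination hv - hu - hdd
    simpa [h2] using this
  exact hδ (hu ▸ isSquare_neg_dotProduct_self_of_isotropic (sub_ne_zero.mpr huv.symm) hdd hpd)

lemma sub_dotProduct_sub_eq_zero_of_qdist_eq (h2 : (2 : F) ≠ 0) {u u' p p' : Fin 3 → F}
    (hup : qdist u p = δ) (hup' : qdist u p' = δ) (hu'p : qdist u' p = δ)
    (hu'p' : qdist u' p' = δ) : (u' - u) ⬝ᵥ (p' - p) = 0 := by
  have : 2 * ((u' - u) ⬝ᵥ (p' - p)) = 0 := by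
    simp only [qdist, vec3_dotProduct, Pi.sub_apply] at *
    linear_combination hup' - hup + hu'p - hu'p'
  simpa [h2] using this

lemma exists_eq_smul_of_cross_eq_zero {v w : Fin 3 → F} (hv : v ≠ 0) (h : v ⨯₃ w = 0) :
    ∃ μ : F, w = μ • v := by
  have := mt crossProduct_ne_zero_iff_linearIndependent.mpr (not_not.mpr h)
  rw [LinearIndependent.pair_iff' hv] at this
  push Not at this
  obtain ⟨μ, hμ⟩ := this
  exact ⟨μ, hμ.symm⟩

lemma exists_eq_smul_cross_of_dotProduct_eq_zero {b c w : Fin 3 → F} (hbc : b ⨯₃ c ≠ 0)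
    (hb : w ⬝ᵥ b = 0) (hc : w ⬝ᵥ c = 0) : ∃ α : F, w = α • b ⨯₃ c :=
  exists_eq_smul_of_cross_eq_zero hbc (by
    rw [cross_cross_eq_smul_sub_smul, dotProduct_comm b, dotProduct_comm c, hb, hc]; simp)

def brownGraph (δ : F) : SimpleGraph (Fin 3 → F) where
  Adj x y := x ≠ y ∧ qdist x y = δ
  symm := ⟨fun x y h ↦ ⟨h.1.symm, qdist_comm x y ▸ h.2⟩⟩
  loopless := ⟨fun _ h ↦ h.1 rfl⟩

theorem brownGraph_k33Free (h2 : (2 : F) ≠ 0) (hδ : ¬IsSquare (-δ)) :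
    K33Free (brownGraph δ).Adj := by
  rintro ⟨x, y, z, a, b, c, hxy, hxz, hyz, hab, hac, hbc, hadj⟩
  simp only [Set.mem_insert_iff, Set.mem_singleton_iff, forall_eq_or_imp, forall_eq,
    brownGraph] at hadj
  obtain ⟨⟨⟨-, hxa⟩, ⟨-, hxb⟩, ⟨-, hxc⟩⟩, ⟨⟨-, hya⟩, ⟨-, hyb⟩, ⟨-, hyc⟩⟩,
    ⟨⟨-, hza⟩, ⟨-, hzb⟩, ⟨-, hzc⟩⟩⟩ := hadj
  by_cases hcol : (b - a) ⨯₃ (c - a) = 0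
  · obtain ⟨μ, hμ⟩ := exists_eq_smul_of_cross_eq_zero (sub_ne_zero.mpr hab.symm) hcol
    rw [qdist_comm] at hxa hxb hxc
    exact sub_ne_smul_sub_of_qdist_eq h2 hδ hab hac hbc hxa hxb hxc μ hμ
  · -- `y - x` and `z - x` are orthogonal to `b - a` and `c - a`, so `x, y, z` are collinear
    obtain ⟨α, hα⟩ := exists_eq_smul_cross_of_dotProduct_eq_zero hcol
      (sub_dotProduct_sub_eq_zero_of_qdist_eq h2 hxa hxb hya hyb)
      (sub_dotProduct_sub_eq_zero_of_qdist_eq h2 hxa hxc hya hyc)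
    obtain ⟨β, hβ⟩ := exists_eq_smul_cross_of_dotProduct_eq_zero hcol
      (sub_dotProduct_sub_eq_zero_of_qdist_eq h2 hxa hxb hza hzb)
      (sub_dotProduct_sub_eq_zero_of_qdist_eq h2 hxa hxc hza hzc)
    have hα0 : α ≠ 0 := by
      rintro rfl
      exact hxy (sub_eq_zero.mp (by simpa using hα)).symm
    refine sub_ne_smul_sub_of_qdist_eq h2 hδ hxy hxz hyz hxa hya hza (β / α) ?_
    rw [hα, hβ, smul_smul, div_mul_cancel₀ _ hα0]

instance [DecidableEq F] : DecidableRel (brownGraph δ).Adj :=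
  fun x y ↦ inferInstanceAs (Decidable (x ≠ y ∧ qdist x y = δ))

lemma card_brownGraph_adj [Fintype F] [DecidableEq F] (hδ : δ ≠ 0) :
    #{x : (Fin 3 → F) × (Fin 3 → F) | (brownGraph δ).Adj x.1 x.2} =
      Fintype.card F ^ 3 * #{v : Fin 3 → F | v ⬝ᵥ v = δ} := by
  rw [show Fintype.card F ^ 3 = #(univ : Finset (Fin 3 → F)) by simp, ← card_product]
  refine card_nbij' (fun x ↦ (x.1, x.1 - x.2)) (fun x ↦ (x.1, x.1 - x.2)) ?_ ?_ ?_ ?_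
  · intro x hx
    simp only [coe_filter, mem_univ, true_and, coe_product, Set.mem_prod,
      Set.mem_ofPred_eq] at hx ⊢
    exact ⟨mem_univ _, hx.2⟩
  · intro x hx
    simp only [coe_filter, mem_univ, true_and, coe_product, Set.mem_prod,
      Set.mem_ofPred_eq] at hx ⊢
    refine ⟨fun h ↦ hδ ?_, by rw [qdist, sub_sub_cancel]; exact hx.2⟩
    rw [← hx.2, sub_eq_self.mp h.symm, dotProduct_zero]
  · intro x _
    simp
  · intro x _
    simp

end Geometry
lemma card_filter_sq_eq_le_two {F : Type*} [Field F] [Fintype F] [DecidableEq F] (c : F) :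
    #{b : F | b ^ 2 = c} ≤ 2 := by
  calc #{b : F | b ^ 2 = c} = #(nthRootsFinset 2 c) := by
        congr 1; ext b; simp [mem_nthRootsFinset]
    _ ≤ 2 := by
        rw [nthRootsFinset_def]
        exact (Multiset.toFinset_card_le _).trans (card_nthRoots 2 c)

lemma card_filter_prod_eq_sum {α β : Type*} [Fintype α] [Fintype β] (P : α → β → Prop)
    [∀ a b, Decidable (P a b)] : #{x : α × β | P x.1 x.2} = ∑ a, #{b | P a b} := by
  simp only [card_filter, Fintype.sum_prod_type]

section SumTwoSquares

variable {p : ℕ} [Fact p.Prime]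

def sumTwoSqCount (t : ZMod p) : ℕ := #{ab : ZMod p × ZMod p | ab.1 ^ 2 + ab.2 ^ 2 = t}

lemma sumTwoSqCount_le {s t : ZMod p} (ht : t ≠ 0) (hs : s ≠ 0) :
    sumTwoSqCount t ≤ sumTwoSqCount s := by
  obtain ⟨c, d, hcd⟩ := ZMod.sq_add_sq p (s / t)
  have hcd0 : c ^ 2 + d ^ 2 ≠ 0 := hcd ▸ div_ne_zero hs ht
  -- multiplication by the "Gaussian integer" `c + d i` of norm `s / t`
  refine card_le_card_of_injOn (fun ab ↦ (ab.1 * c - ab.2 * d, ab.1 * d + ab.2 * c)) ?_ ?_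
  · rintro ⟨a, b⟩ hab
    simp only [coe_filter, mem_univ, true_and, Set.mem_ofPred_eq] at hab ⊢
    calc _ = (a ^ 2 + b ^ 2) * (c ^ 2 + d ^ 2) := by ring
      _ = s := by rw [hab, hcd]; field_simp
  · rintro ⟨a, b⟩ - ⟨a', b'⟩ - h
    simp only [Prod.mk.injEq] at h ⊢
    obtain ⟨h1, h2⟩ := h
    constructor
    · apply mul_right_cancel₀ hcd0
      linear_combination c * h1 + d * h2
    · apply mul_right_cancel₀ hcd0
      linear_combination c * h2 - d * h1

lemma sumTwoSqCount_zero_le : sumTwoSqCount (0 : ZMod p) ≤ 2 * p := by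
  rw [sumTwoSqCount, card_filter_prod_eq_sum fun a b : ZMod p ↦ a ^ 2 + b ^ 2 = 0]
  calc ∑ a : ZMod p, #{b | a ^ 2 + b ^ 2 = 0} ≤ ∑ _a : ZMod p, 2 := by
        gcongr with a
        simpa only [add_eq_zero_iff_eq_neg'] using card_filter_sq_eq_le_two (-a ^ 2)
    _ = 2 * p := by simp [ZMod.card, mul_comm]

lemma sum_sumTwoSqCount : ∑ t : ZMod p, sumTwoSqCount t = p ^ 2 := by
  have := card_eq_sum_card_fiberwise (f := fun ab : ZMod p × ZMod p ↦ ab.1 ^ 2 + ab.2 ^ 2)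
    (s := univ) (t := univ) fun _ _ ↦ mem_univ _
  simpa [sumTwoSqCount, ZMod.card, sq] using this.symm

lemma sub_two_le_sumTwoSqCount {t : ZMod p} (ht : t ≠ 0) : p - 2 ≤ sumTwoSqCount t := by
  have hsum : sumTwoSqCount (0 : ZMod p) + (p - 1) * sumTwoSqCount t = p ^ 2 := by
    rw [← sum_sumTwoSqCount, ← add_sum_erase _ _ (mem_univ 0), sum_congr rfl fun s hs ↦
      le_antisymm (sumTwoSqCount_le (ne_of_mem_erase hs) ht)
        (sumTwoSqCount_le ht (ne_of_mem_erase hs))]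
    simp [card_erase_of_mem, ZMod.card]
  have h0 := sumTwoSqCount_zero_le (p := p)
  obtain ⟨k, rfl⟩ := Nat.exists_eq_add_of_le (Fact.out : p.Prime).two_le
  simp only [add_tsub_cancel_left, show 2 + k - 1 = k + 1 by omega] at hsum ⊢
  nlinarith

lemma sub_two_sq_le_card_dotProduct_self_eq (δ : ZMod p) :
    (p - 2) ^ 2 ≤ #{v : Fin 3 → ZMod p | v ⬝ᵥ v = δ} := by
  have hslice : #{v : Fin 3 → ZMod p | v ⬝ᵥ v = δ} =
      #{x : ZMod p × (ZMod p × ZMod p) | x.2.1 ^ 2 + x.2.2 ^ 2 = δ - x.1 ^ 2} := by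
    refine card_nbij' (fun v ↦ (v 2, v 0, v 1)) (fun x ↦ ![x.2.1, x.2.2, x.1]) ?_ ?_ ?_ ?_
    · intro v hv
      simp only [coe_filter, mem_univ, true_and, Set.mem_ofPred_eq, vec3_dotProduct] at hv ⊢
      linear_combination hv
    · intro x hx
      simp only [coe_filter, mem_univ, true_and, Set.mem_ofPred_eq, dotProduct_cons, head_cons,
        tail_cons, dotProduct_of_isEmpty, add_zero] at hx ⊢
      linear_combination hx
    · intro v _
      ext i; fin_cases i <;> rfl
    · intro x _
      rfl
  have hgood : p - 2 ≤ #{c : ZMod p | c ^ 2 ≠ δ} := by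
    have hsplit := card_filter_add_card_filter_not (s := univ) fun c : ZMod p ↦ c ^ 2 = δ
    rw [card_univ, ZMod.card] at hsplit
    have hbad := card_filter_sq_eq_le_two δ
    simp only [ne_eq]
    omega
  rw [hslice]
  calc (p - 2) ^ 2 ≤ #{c : ZMod p | c ^ 2 ≠ δ} * (p - 2) := by rw [sq]; gcongr
    _ = ∑ c ∈ {c : ZMod p | c ^ 2 ≠ δ}, (p - 2) := by rw [sum_const, smul_eq_mul]
    _ ≤ ∑ c ∈ {c : ZMod p | c ^ 2 ≠ δ}, sumTwoSqCount (δ - c ^ 2) := by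
        gcongr with c hc
        exact sub_two_le_sumTwoSqCount (sub_ne_zero.mpr (mem_filter.mp hc).2.symm)
    _ ≤ ∑ c, sumTwoSqCount (δ - c ^ 2) := sum_le_sum_of_subset (subset_univ _)
    _ = _ := (card_filter_prod_eq_sum fun c (ab : ZMod p × ZMod p) ↦
          ab.1 ^ 2 + ab.2 ^ 2 = δ - c ^ 2).symm

end SumTwoSquares

section DoubleCover

variable {V W : Type*} {H : SimpleGraph V} (f : V ↪ W)

lemma isLeft_and_isRight_of_adj_bipartiteDoubleCover_map {u v : W ⊕ W}
    (h : (H.bipartiteDoubleCover.map (f.sumMap f)).Adj u v) :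
    u.isLeft ∧ v.isRight ∨ u.isRight ∧ v.isLeft := by
  obtain ⟨u', v', hadj, rfl, rfl⟩ := (SimpleGraph.map_adj _ _ _ _).mp h
  rcases u' with u' | u' <;> rcases v' with v' | v' <;> simp_all

theorem K33Free.bipartiteDoubleCover_map (hH : K33Free H.Adj) :
    K33Free fun u v ↦ (H.bipartiteDoubleCover.map (f.sumMap f)).Adj (.inl u) (.inr v) := by
  convert hH.map f.injective f.injective using 3 with u v
  rw [SimpleGraph.map_adj]
  constructor
  · rintro ⟨u' | u', v' | v', hadj, hu, hv⟩ <;> simp only [SimpleGraph.bipartiteDoubleCover,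
      Embedding.coe_sumMap, Sum.map_inl, Sum.map_inr, Sum.inl.injEq, Sum.inr.injEq,
      reduceCtorEq] at hadj hu hv
    exact ⟨u', v', hadj, hu, hv⟩
  · rintro ⟨a, b, hab, rfl, rfl⟩
    exact ⟨.inl a, .inr b, hab, rfl, rfl⟩

lemma ncard_edgeSet_bipartiteDoubleCover_map [Fintype V] [Fintype W] [DecidableEq W]
    [DecidableRel H.Adj] :
    (H.bipartiteDoubleCover.map (f.sumMap f)).edgeSet.ncard = #{x : V × V | H.Adj x.1 x.2} := by
  classical
  rw [← SimpleGraph.coe_edgeFinset, Set.ncard_coe_finset, SimpleGraph.card_edgeFinset_map,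
    SimpleGraph.card_edgeFinset_bipartiteDoubleCover, SimpleGraph.two_mul_card_edgeFinset]

end DoubleCover

lemma exists_prime_cube_le_lt_eight_mul_cube {n : ℕ} (hn : 7 ^ 3 ≤ n) :
    ∃ q, q.Prime ∧ 7 ≤ q ∧ q ^ 3 ≤ n ∧ n < 8 * q ^ 3 := by
  let P q := q.Prime ∧ q ^ 3 ≤ n
  set q := Nat.findGreatest P n
  have h7n : 7 ≤ n := le_trans (by norm_num) hn
  have hP7 : P 7 := ⟨by norm_num, hn⟩
  have h7 : 7 ≤ q := Nat.le_findGreatest h7n hP7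
  obtain ⟨hq, hqn⟩ : P q := Nat.findGreatest_spec h7n hP7
  -- Bertrand's postulate: the next prime is at most `2 q`
  obtain ⟨r, hr, hqr, hr2q⟩ := Nat.exists_prime_lt_and_le_two_mul q hq.ne_zero
  have hnr : n < r ^ 3 := by
    by_contra! hrn
    exact Nat.findGreatest_is_greatest (P := P) hqr
      ((Nat.le_self_pow (by norm_num) r).trans hrn) ⟨hr, hrn⟩
  refine ⟨q, hq, h7, hqn, hnr.trans_le ?_⟩
  calc r ^ 3 ≤ (2 * q) ^ 3 := Nat.pow_le_pow_left hr2q 3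
    _ = 8 * q ^ 3 := by ring

lemma rpow_five_thirds_lt {x y : ℝ} (hx : 0 ≤ x) (hxy : x < 8 * y ^ 3) (hy : 7 ≤ y) :
    1 / 100 * x ^ ((5 : ℝ) / 3) < y ^ 3 * (y - 2) ^ 2 := by
  have hy0 : 0 < y := by linarith
  have hpow : x ^ ((5 : ℝ) / 3) ≤ 32 * y ^ 5 := by
    calc x ^ ((5 : ℝ) / 3) ≤ ((2 * y) ^ (3 : ℕ)) ^ ((5 : ℝ) / 3) :=
          Real.rpow_le_rpow hx (by linarith) (by norm_num)
      _ = 32 * y ^ 5 := by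
          rw [← Real.rpow_natCast, ← Real.rpow_mul (by positivity)]
          norm_num [Real.rpow_natCast]
          ring
  have hsq : 25 / 49 * y ^ 2 ≤ (y - 2) ^ 2 := by nlinarith
  nlinarith [pow_pos hy0 3, pow_pos hy0 5]

end Brown

open Brown in
theorem stmt_16 : ∃ c : ℝ, 0 < c ∧ ∀ᶠ n : ℕ in Filter.atTop,
    ∃ G : SimpleGraph (Fin n ⊕ Fin n),
      (∀ u v, G.Adj u v → (u.isLeft ∧ v.isRight) ∨ (u.isRight ∧ v.isLeft)) ∧
      (¬ ∃ u1 u2 u3 v1 v2 v3 : Fin n,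
        u1 ≠ u2 ∧ u1 ≠ u3 ∧ u2 ≠ u3 ∧ v1 ≠ v2 ∧ v1 ≠ v3 ∧ v2 ≠ v3 ∧
        ∀ u ∈ ({u1, u2, u3} : Set (Fin n)), ∀ v ∈ ({v1, v2, v3} : Set (Fin n)),
          G.Adj (Sum.inl u) (Sum.inr v)) ∧
      c * (n : ℝ) ^ ((5 : ℝ)/3) < (G.edgeSet.ncard : ℝ) := by
  refine ⟨1 / 100, by norm_num, eventually_atTop.2 ⟨7 ^ 3, fun n hn ↦ ?_⟩⟩
  obtain ⟨q, hq, hq7, hqn, hnq⟩ := exists_prime_cube_le_lt_eight_mul_cube hn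
  have : Fact q.Prime := ⟨hq⟩
  have hchar : ringChar (ZMod q) ≠ 2 := by rw [ZMod.ringChar_zmod_n]; omega
  obtain ⟨a, ha⟩ := FiniteField.exists_nonsquare hchar
  have hδ : ¬IsSquare (-(-a)) := by rwa [neg_neg]
  have hδ0 : -a ≠ 0 := neg_ne_zero.mpr (by rintro rfl; exact ha IsSquare.zero)
  obtain ⟨f⟩ : Nonempty ((Fin 3 → ZMod q) ↪ Fin n) :=
    Function.Embedding.nonempty_of_card_le (by simpa [ZMod.card] using hqn)
  refine ⟨(brownGraph (-a)).bipartiteDoubleCover.map (f.sumMap f),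
    fun _ _ ↦ isLeft_and_isRight_of_adj_bipartiteDoubleCover_map f,
    (brownGraph_k33Free (Ring.two_ne_zero hchar) hδ).bipartiteDoubleCover_map f, ?_⟩
  have hcount : q ^ 3 * (q - 2) ^ 2 ≤
      ((brownGraph (-a)).bipartiteDoubleCover.map (f.sumMap f)).edgeSet.ncard := by
    rw [ncard_edgeSet_bipartiteDoubleCover_map, card_brownGraph_adj hδ0, ZMod.card]
    exact Nat.mul_le_mul_left _ (sub_two_sq_le_card_dotProduct_self_eq _)
  calc 1 / 100 * (n : ℝ) ^ ((5 : ℝ) / 3) < (q : ℝ) ^ 3 * ((q : ℝ) - 2) ^ 2 :=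
        rpow_five_thirds_lt n.cast_nonneg (by exact_mod_cast hnq) (by exact_mod_cast hq7)
    _ = ((q ^ 3 * (q - 2) ^ 2 : ℕ) : ℝ) := by
        rw [Nat.cast_mul, Nat.cast_pow, Nat.cast_pow, Nat.cast_sub (by omega), Nat.cast_ofNat]
    _ ≤ _ := Nat.cast_le.mpr hcount
end

section
/- Let k ≥ 4 be an integer and let a_1 < a_2 < ⋯ < a_{3k} be positive integers, each of which is a product of two distinct primes. Define a simple graph G whose vertices are the primes dividing a_1 a_2 ⋯ a_{3k}, with two distinct primes p, q adjacent if and only if p·q = a_h for some 1 ≤ h ≤ 3k. If G contains no cycle of length ℓ for any 3 ≤ ℓ ≤ k, then the product a_1 a_2 ⋯ a_{3k} is not a perfect cube (i.e., there is no positive integer x with a_1 a_2 ⋯ a_{3k} = x³). -/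
/-!
Read each `a_h = p q` as the edge `pq` of `G`. Since the `a_h` are squarefree, the exponent of a
prime `p` in `∏ a_h` is the number of `a_h` divisible by `p`, which is the degree of `p` in `G`.
In a cube this is a positive multiple of `3`, so `G` has minimum degree at least `3`, and double
counting the `3k` edges leaves at most `2k` vertices.

On the other hand, in a graph of minimum degree `3` and girth greater than `k`, the layers of
vertices joined to a fixed vertex `v` by paths of length `l` are pairwise disjoint for `2l ≤ k`
and each at least doubles the previous one (the Moore bound), which gives at least
`3 · 2^⌊k/2⌋ - 2 > 2k` vertices for `k ≥ 4`, up to one vertex that is found in the next layer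
when `k` is odd.
-/

open Finset

theorem four_mul_lt_three_mul_sum_two_pow {r : ℕ} (hr : 2 ≤ r) :
    4 * r < 3 * ∑ i ∈ range r, 2 ^ i := by
  induction r, hr using Nat.le_induction with
  | base => decide
  | succ r hr ih =>
    have : 2 ≤ 2 ^ r := Nat.le_self_pow (by omega) 2
    rw [sum_range_succ]
    omega

namespace SimpleGraph

variable {V : Type*} {G : SimpleGraph V}

theorem lt_egirth_of_forall_isCycle {k : ℕ}
    (h : ∀ v (w : G.Walk v v), w.IsCycle → k < w.length) : ↑k < G.egirth :=
  (ENat.add_one_le_iff (ENat.natCast_ne_top k)).1 <| le_egirth.2 fun v w hw ↦ by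
    exact_mod_cast h v w hw

theorem Walk.IsPath.egirth_le_length_add_length {u v : V} {p q : G.Walk u v} (hp : p.IsPath)
    (hq : q.IsPath) (hpq : p ≠ q) : G.egirth ≤ ↑(p.length + q.length) := by
  obtain ⟨_, _, p', q', hp', hq', hc⟩ := hp.exists_isCycle_of_ne hq hpq
  calc G.egirth ≤ (p'.append q'.reverse).length := egirth_le_length hc
    _ ≤ ↑(p.length + q.length) := by
      rw [Walk.length_append, Walk.length_reverse, ENat.natCast_le_natCast]
      exact add_le_add (Walk.length_le_of_isSubwalk hp') (Walk.length_le_of_isSubwalk hq')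

variable [Fintype V]

-- Below half the girth, this is the sphere of radius `l` around `v`.
open Classical in
noncomputable def pathSphere (G : SimpleGraph V) (v : V) (l : ℕ) : Finset V :=
  {u | ∃ p : G.Walk u v, p.IsPath ∧ p.length = l}

variable {v : V} {l : ℕ}

theorem mem_pathSphere {u : V} :
    u ∈ G.pathSphere v l ↔ ∃ p : G.Walk u v, p.IsPath ∧ p.length = l := by
  simp [pathSphere]

theorem disjoint_pathSphere {l₁ l₂ : ℕ} (hne : l₁ ≠ l₂) (hg : ↑(l₁ + l₂) < G.egirth) :
    Disjoint (G.pathSphere v l₁) (G.pathSphere v l₂) := by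
  refine Finset.disjoint_left.2 fun u h₁ h₂ ↦ ?_
  obtain ⟨p, hp, rfl⟩ := mem_pathSphere.1 h₁
  obtain ⟨q, hq, rfl⟩ := mem_pathSphere.1 h₂
  have hpq : p ≠ q := by rintro rfl; exact hne rfl
  exact (hp.egirth_le_length_add_length hq hpq).not_gt hg

theorem exists_mem_pathSphere_of_mem_support {u w : V} {p : G.Walk u v} (hp : p.IsPath)
    (hw : w ∈ p.support) : ∃ j ≤ p.length, w ∈ G.pathSphere v j := by
  classical
  exact ⟨_, p.length_dropUntil_le_length hw, mem_pathSphere.2 ⟨_, hp.dropUntil hw, rfl⟩⟩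

theorem mem_pathSphere_succ_of_adj {u c : V} {p : G.Walk u v} (hp : p.IsPath)
    (hg : ↑(p.length + 1) < G.egirth) (huc : G.Adj u c) (hc : c ≠ p.snd) :
    c ∈ G.pathSphere v (p.length + 1) := by
  classical
  by_cases hcp : c ∈ p.support
  · have hne : p.takeUntil c hcp ≠ huc.toWalk := by
      intro h
      apply hc
      rw [← p.snd_takeUntil huc.ne' hcp, h]
      rfl
    have hcycle := (hp.takeUntil hcp).egirth_le_length_add_length (Walk.IsPath.of_adj huc) hne
    have hlen := p.length_takeUntil_le_length hcp
    exact absurd hg (hcycle.trans (ENat.natCast_le_natCast.2 (by simpa using hlen))).not_gt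
  · exact mem_pathSphere.2 ⟨.cons huc.symm p, hp.cons hcp, rfl⟩

theorem eq_of_adj_of_mem_pathSphere {u₁ u₂ c : V} (h₁ : u₁ ∈ G.pathSphere v l)
    (h₂ : u₂ ∈ G.pathSphere v l) (hc : c ∈ G.pathSphere v (l + 1))
    (hg : ↑(2 * l + 2) < G.egirth) (hu₁ : G.Adj u₁ c) (hu₂ : G.Adj u₂ c) : u₁ = u₂ := by
  have hcp : ∀ {u} (p : G.Walk u v), p.IsPath → p.length = l → c ∉ p.support := by
    rintro u p hp rfl hcp
    obtain ⟨j, hj, hcj⟩ := exists_mem_pathSphere_of_mem_support hp hcp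
    have hg' : ↑(j + (p.length + 1)) < G.egirth :=
      (ENat.natCast_le_natCast.2 (by omega)).trans_lt hg
    exact Finset.disjoint_left.1 (disjoint_pathSphere (by omega) hg') hcj hc
  obtain ⟨p₁, hp₁, hl₁⟩ := mem_pathSphere.1 h₁
  obtain ⟨p₂, hp₂, hl₂⟩ := mem_pathSphere.1 h₂
  by_contra hne
  have hpq : Walk.cons hu₁.symm p₁ ≠ Walk.cons hu₂.symm p₂ := fun h ↦
    hne (by simpa using congrArg Walk.snd h)
  have hcycle := (hp₁.cons (hcp p₁ hp₁ hl₁)).egirth_le_length_add_length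
    (hp₂.cons (hcp p₂ hp₂ hl₂)) hpq
  exact absurd hg (hcycle.trans (ENat.natCast_le_natCast.2 (by simp; omega))).not_gt

theorem sum_card_pathSphere_le_card {m : ℕ} (hg : ↑(2 * m) ≤ G.egirth) :
    ∑ l ∈ range (m + 1), #(G.pathSphere v l) ≤ Fintype.card V := by
  classical
  rw [← card_biUnion]
  · exact card_le_univ _
  · intro l₁ h₁ l₂ h₂ hne
    rw [coe_range, Set.mem_Iio] at h₁ h₂
    exact disjoint_pathSphere hne ((ENat.natCast_lt_natCast.2 (by omega)).trans_le hg)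

variable [DecidableRel G.Adj]

theorem degree_le_card_pathSphere_one : G.degree v ≤ #(G.pathSphere v 1) := by
  rw [← card_neighborFinset_eq_degree]
  refine card_le_card fun c hc ↦ mem_pathSphere.2 ⟨(G.adj_symm ?_).toWalk, .of_adj _, by simp⟩
  exact (mem_neighborFinset _ _ _).1 hc

theorem degree_sub_one_le_card_adj_pathSphere_succ {u : V} (hu : u ∈ G.pathSphere v l)
    (hg : ↑(l + 1) < G.egirth) :
    G.degree u - 1 ≤ #{c ∈ G.pathSphere v (l + 1) | G.Adj u c} := by
  classical
  obtain ⟨p, hp, rfl⟩ := mem_pathSphere.1 hu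
  rw [← card_neighborFinset_eq_degree]
  refine (pred_card_le_card_erase (a := p.snd)).trans (card_le_card fun c hc ↦ ?_)
  obtain ⟨hne, hc⟩ := mem_erase.1 hc
  rw [mem_neighborFinset] at hc
  exact mem_filter.2 ⟨mem_pathSphere_succ_of_adj hp hg hc hne, hc⟩

variable {d : ℕ}

theorem mul_card_pathSphere_le_card_pathSphere_succ (hdeg : ∀ u, d + 1 ≤ G.degree u)
    (hg : ↑(2 * l + 2) < G.egirth) :
    d * #(G.pathSphere v l) ≤ #(G.pathSphere v (l + 1)) := by
  have hchildren : ∀ u ∈ G.pathSphere v l,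
      d ≤ #((G.pathSphere v (l + 1)).bipartiteAbove G.Adj u) := fun u hu ↦ by
    have := degree_sub_one_le_card_adj_pathSphere_succ hu
      ((ENat.natCast_le_natCast.2 (by omega)).trans_lt hg)
    have := hdeg u
    unfold bipartiteAbove
    omega
  have hparent : ∀ c ∈ G.pathSphere v (l + 1),
      #((G.pathSphere v l).bipartiteBelow G.Adj c) ≤ 1 := fun c hc ↦
    card_le_one.2 fun u₁ h₁ u₂ h₂ ↦ by
      rw [mem_bipartiteBelow] at h₁ h₂
      exact eq_of_adj_of_mem_pathSphere h₁.1 h₂.1 hc hg h₁.2 h₂.2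
  simpa [mul_comm] using card_nsmul_le_card_nsmul G.Adj hchildren hparent

theorem mul_pow_le_card_pathSphere_succ (hdeg : ∀ u, d + 1 ≤ G.degree u)
    (hg : ↑(2 * l + 2) < G.egirth) : (d + 1) * d ^ l ≤ #(G.pathSphere v (l + 1)) := by
  induction l with
  | zero => simpa using (hdeg v).trans degree_le_card_pathSphere_one
  | succ l ih =>
    calc (d + 1) * d ^ (l + 1) = d * ((d + 1) * d ^ l) := by ring
      _ ≤ d * #(G.pathSphere v (l + 1)) :=
        Nat.mul_le_mul_left _ (ih ((ENat.natCast_le_natCast.2 (by omega)).trans_lt hg))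
      _ ≤ #(G.pathSphere v (l + 1 + 1)) :=
        mul_card_pathSphere_le_card_pathSphere_succ hdeg hg

theorem one_add_mul_geomSum_le_sum_card_pathSphere (hdeg : ∀ u, d + 1 ≤ G.degree u) {r : ℕ}
    (hg : ↑(2 * r) < G.egirth) :
    1 + (d + 1) * ∑ i ∈ range r, d ^ i ≤ ∑ l ∈ range (r + 1), #(G.pathSphere v l) := by
  induction r with
  | zero => simpa using ⟨v, mem_pathSphere.2 ⟨.nil, .nil, rfl⟩⟩
  | succ r ih =>
    rw [sum_range_succ, mul_add, ← add_assoc, sum_range_succ]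
    exact add_le_add (ih ((ENat.natCast_le_natCast.2 (by omega)).trans_lt hg))
      (mul_pow_le_card_pathSphere_succ hdeg hg)

theorem pathSphere_nonempty (hdeg : ∀ u, 2 ≤ G.degree u) (hg : ↑l < G.egirth) :
    (G.pathSphere v l).Nonempty := by
  induction l with
  | zero => exact ⟨v, mem_pathSphere.2 ⟨.nil, .nil, rfl⟩⟩
  | succ l ih =>
    obtain ⟨u, hu⟩ := ih ((ENat.natCast_lt_natCast.2 (by omega)).trans hg)
    have := degree_sub_one_le_card_adj_pathSphere_succ hu hg
    have := hdeg u
    obtain ⟨c, hc⟩ :=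
      card_pos.1 (show 0 < #{c ∈ G.pathSphere v (l + 1) | G.Adj u c} by omega)
    exact ⟨c, (mem_filter.1 hc).1⟩

theorem moore_bound [Nonempty V] (hdeg : ∀ u, d + 1 ≤ G.degree u) {r : ℕ}
    (hg : ↑(2 * r) < G.egirth) : 1 + (d + 1) * ∑ i ∈ range r, d ^ i ≤ Fintype.card V := by
  obtain ⟨v⟩ := ‹Nonempty V›
  exact (one_add_mul_geomSum_le_sum_card_pathSphere (v := v) hdeg hg).trans
    (sum_card_pathSphere_le_card hg.le)

theorem two_mul_lt_card_of_three_le_degree [Nonempty V] {k : ℕ} (hk : 4 ≤ k)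
    (hdeg : ∀ u, 3 ≤ G.degree u) (hg : ↑k < G.egirth) : 2 * k < Fintype.card V := by
  obtain ⟨v⟩ := ‹Nonempty V›
  obtain ⟨r, rfl | rfl⟩ := Nat.even_or_odd' k
  · have := moore_bound (d := 2) hdeg hg
    have := four_mul_lt_three_mul_sum_two_pow (r := r) (by omega)
    omega
  · -- For `k = 5` the layers up to `r` fall one vertex short; layer `r + 1` supplies it.
    have hr : ↑(2 * r) < G.egirth := (ENat.natCast_lt_natCast.2 (by omega)).trans hg
    have hupper := sum_card_pathSphere_le_card (v := v) (m := r + 1) (Order.add_one_le_of_lt hg)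
    rw [sum_range_succ] at hupper
    have := one_add_mul_geomSum_le_sum_card_pathSphere (v := v) (d := 2) hdeg hr
    have := card_pos.2 (pathSphere_nonempty (v := v) (l := r + 1)
      (fun u ↦ (hdeg u).trans' (by norm_num)) ((ENat.natCast_lt_natCast.2 (by omega)).trans hg))
    have := four_mul_lt_three_mul_sum_two_pow (r := r) (by omega)
    omega

end SimpleGraph

theorem Nat.factorization_prod_apply_eq_card_filter_dvd {ι : Type*} {s : Finset ι}
    {f : ι → ℕ} (hf : ∀ i ∈ s, Squarefree (f i)) {p : ℕ} (hp : p.Prime) :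
    (∏ i ∈ s, f i).factorization p = #{i ∈ s | p ∣ f i} := by
  rw [Nat.factorization_prod fun i hi ↦ (hf i hi).ne_zero, Finsupp.finsetSum_apply, card_filter]
  refine sum_congr rfl fun i hi ↦ ?_
  split_ifs with h
  · exact Nat.factorization_eq_one_of_squarefree (hf i hi) hp h
  · exact Nat.factorization_eq_zero_of_not_dvd h

theorem Nat.exists_prime_mul_eq_of_dvd_mul {p q r : ℕ} (hp : p.Prime) (hq : q.Prime)
    (hpq : p ≠ q) (hr : r.Prime) (h : r ∣ p * q) : ∃ s, s.Prime ∧ r ≠ s ∧ r * s = p * q := by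
  rcases hr.dvd_mul.1 h with h | h
  · obtain rfl := (Nat.prime_dvd_prime_iff_eq hr hp).1 h
    exact ⟨q, hq, hpq, rfl⟩
  · obtain rfl := (Nat.prime_dvd_prime_iff_eq hr hq).1 h
    exact ⟨p, hp, hpq.symm, mul_comm _ _⟩

theorem Nat.squarefree_of_exists_eq_prime_mul_prime {n : ℕ}
    (h : ∃ p q : ℕ, p.Prime ∧ q.Prime ∧ p ≠ q ∧ n = p * q) : Squarefree n := by
  obtain ⟨p, q, hp, hq, hpq, rfl⟩ := h
  exact (Nat.squarefree_mul ((Nat.coprime_primes hp hq).2 hpq)).2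
    ⟨hp.prime.squarefree, hq.prime.squarefree⟩

section ProductsOfTwoPrimes

variable {ι : Type*} [Fintype ι] {a : ι → ℕ}

theorem three_le_card_filter_dvd_of_prod_eq_cube (hsq : ∀ i, Squarefree (a i)) {x : ℕ}
    (hx : ∏ i, a i = x ^ 3) {p : ℕ} (hp : p ∈ (∏ i, a i).primeFactors) : 3 ≤ #{i | p ∣ a i} := by
  obtain ⟨hp, hdvd, hne⟩ := Nat.mem_primeFactors.1 hp
  have hcount :=
    Nat.factorization_prod_apply_eq_card_filter_dvd (s := univ) (fun i _ ↦ hsq i) hp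
  have hpos := hp.factorization_pos_of_dvd hne hdvd
  rw [hcount] at hpos
  refine Nat.le_of_dvd hpos ⟨x.factorization p, ?_⟩
  rw [← hcount, hx, Nat.factorization_pow, Finsupp.smul_apply, smul_eq_mul]

variable (hsp : ∀ i, ∃ p q : ℕ, p.Prime ∧ q.Prime ∧ p ≠ q ∧ a i = p * q)
include hsp

theorem three_mul_card_primeFactors_prod_le {x : ℕ} (hx : ∏ i, a i = x ^ 3) :
    3 * #(∏ i, a i).primeFactors ≤ 2 * Fintype.card ι := by
  have hprimes : ∀ i ∈ (univ : Finset ι),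
      #(((∏ i, a i).primeFactors).bipartiteBelow (· ∣ a ·) i) ≤ 2 := fun i _ ↦ by
    obtain ⟨p, q, hp, hq, hpq, hi⟩ := hsp i
    refine (card_le_card fun r hr ↦ ?_).trans (card_le_two (a := p) (b := q))
    rw [mem_bipartiteBelow, Nat.mem_primeFactors] at hr
    obtain ⟨⟨hr, -⟩, hdvd⟩ := hr
    rw [hi] at hdvd
    rcases hr.dvd_mul.1 hdvd with h | h
    · simp [(Nat.prime_dvd_prime_iff_eq hr hp).1 h]
    · simp [(Nat.prime_dvd_prime_iff_eq hr hq).1 h]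
  have := card_nsmul_le_card_nsmul (· ∣ a ·)
    (fun p hp ↦ three_le_card_filter_dvd_of_prod_eq_cube
      (fun i ↦ Nat.squarefree_of_exists_eq_prime_mul_prime (hsp i)) hx hp) hprimes
  simpa [mul_comm] using this

theorem card_filter_dvd_le_degree_induce {G : SimpleGraph ℕ}
    (hG : ∀ p q : ℕ, G.Adj p q ↔ p.Prime ∧ q.Prime ∧ p ≠ q ∧ ∃ i, p * q = a i)
    (ha : Function.Injective a) [DecidableRel (G.induce (∏ i, a i).primeFactors).Adj] {p : ℕ}
    (hp : p ∈ (∏ i, a i).primeFactors) :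
    #{i | p ∣ a i} ≤ (G.induce (∏ i, a i).primeFactors).degree ⟨p, hp⟩ := by
  obtain ⟨hp', -, hne⟩ := Nat.mem_primeFactors.1 hp
  rw [← SimpleGraph.card_neighborFinset_eq_degree]
  refine card_le_card_of_forall_subsingleton
    (fun i (q : ((∏ i, a i).primeFactors : Set ℕ)) ↦ p * q = a i) (fun i hi ↦ ?_)
    fun q _ i hi j hj ↦ ha (hi.2.symm.trans hj.2)
  obtain ⟨p₁, p₂, hp₁, hp₂, hp₁₂, hi'⟩ := hsp i
  obtain ⟨q, hq, hpq, hpqi⟩ := Nat.exists_prime_mul_eq_of_dvd_mul hp₁ hp₂ hp₁₂ hp'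
    (hi' ▸ (mem_filter.1 hi).2)
  rw [← hi'] at hpqi
  have hqP : q ∈ (∏ i, a i).primeFactors := Nat.mem_primeFactors.2
    ⟨hq, (Dvd.intro_left p hpqi).trans (dvd_prod_of_mem a (mem_univ i)), hne⟩
  exact ⟨⟨q, hqP⟩,
    (SimpleGraph.mem_neighborFinset _ _ _).2 ((hG p q).2 ⟨hp', hq, hpq, i, hpqi⟩), hpqi⟩

end ProductsOfTwoPrimes

theorem stmt_17 (k : ℕ) (hk : 4 ≤ k) (a : Fin (3 * k) → ℕ) (hmono : StrictMono a)
    (hsp : ∀ i, ∃ p q : ℕ, p.Prime ∧ q.Prime ∧ p ≠ q ∧ a i = p * q)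
    (G : SimpleGraph ℕ)
    (hG : ∀ p q : ℕ, G.Adj p q ↔
      p.Prime ∧ q.Prime ∧ p ≠ q ∧ ∃ h : Fin (3 * k), p * q = a h)
    (hcycfree : ¬ ∃ (v : ℕ) (w : G.Walk v v), w.IsCycle ∧ 3 ≤ w.length ∧ w.length ≤ k) :
    ¬ ∃ x : ℕ, 0 < x ∧ (∏ i, a i) = x ^ 3 := by
  classical
  rintro ⟨x, hx, hprod⟩
  have hP := three_mul_card_primeFactors_prod_le hsp hprod
  set P := (∏ i, a i).primeFactors
  obtain ⟨p, q, hp, -, -, hpq⟩ := hsp ⟨0, by omega⟩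
  have : Nonempty (P : Set ℕ) := ⟨⟨p, Nat.mem_primeFactors.2 ⟨hp,
    (Dvd.intro q hpq.symm).trans (dvd_prod_of_mem a (mem_univ _)), hprod ▸ by positivity⟩⟩⟩
  have hdeg : ∀ v, 3 ≤ (G.induce P).degree v := fun ⟨p, hp⟩ ↦
    (three_le_card_filter_dvd_of_prod_eq_cube
      (fun i ↦ Nat.squarefree_of_exists_eq_prime_mul_prime (hsp i)) hprod hp).trans
      (card_filter_dvd_le_degree_induce hsp hG hmono.injective hp)
  have hgirth : (k : ℕ∞) < G.egirth := SimpleGraph.lt_egirth_of_forall_isCycle fun v w hw ↦ by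
    by_contra! hlen
    exact hcycfree ⟨v, w, hw, hw.three_le_length, hlen⟩
  have hcard := SimpleGraph.two_mul_lt_card_of_three_le_degree hk hdeg
    (hgirth.trans_le (SimpleGraph.IsContained.egirth_le ⟨SimpleGraph.Copy.induce G _⟩))
  simp only [Finset.coe_sort_coe, Fintype.card_coe, Fintype.card_fin] at hcard hP
  omega
end

section
/- For every sufficiently large n the following holds: if a_1, a_2, a_3, a_4 are positive integers in the interval [n/log n, n] such that for each i every positive integer d with d² | a_i satisfies d ≤ log n, and if a_1 a_2 a_3 a_4 is a perfect cube (a_1 a_2 a_3 a_4 = x³ for some positive integer x), then for each i there exist positive integers u_i, v_i, w_i with n^{1/3}/(log n)^{16} < u_i, v_i, w_i < n^{1/3}·(log n)^{16} and a_i = u_i·v_i·w_i. -/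
open Finset Filter

private lemma cube_root_range {n z : ℕ} (hL : 1 < Real.log n) (hn0 : 0 < n)
    (h1 : (n:ℝ) / (Real.log n)^28 ≤ (z:ℝ)^3)
    (h2 : (z:ℝ)^3 ≤ (n:ℝ) * (Real.log n)^39) :
    (n:ℝ)^((1:ℝ)/3) / (Real.log n)^16 < (z:ℝ) ∧
      (z:ℝ) < (n:ℝ)^((1:ℝ)/3) * (Real.log n)^16 := by
  have hn0' : (0:ℝ) < n := by exact_mod_cast hn0
  have hL0 : (0:ℝ) < Real.log n := lt_trans one_pos hL
  have hX0 : (0:ℝ) < (n:ℝ)^((1:ℝ)/3) := Real.rpow_pos_of_pos hn0' _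
  have hX3 : ((n:ℝ)^((1:ℝ)/3))^3 = (n:ℝ) := by
    rw [← Real.rpow_natCast ((n:ℝ)^((1:ℝ)/3)) 3, ← Real.rpow_mul (le_of_lt hn0')]
    norm_num
  constructor
  · refine lt_of_pow_lt_pow_left₀ 3 (by positivity) ?_
    have e : ((n:ℝ)^((1:ℝ)/3) / (Real.log n)^16)^3 = (n:ℝ) / (Real.log n)^48 := by
      rw [div_pow, hX3]
      norm_num [← pow_mul]
    rw [e]
    refine lt_of_lt_of_le ?_ h1
    apply div_lt_div_of_pos_left hn0' (by positivity)
    exact pow_lt_pow_right₀ hL (by norm_num)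
  · refine lt_of_pow_lt_pow_left₀ 3 (by positivity) ?_
    have e : ((n:ℝ)^((1:ℝ)/3) * (Real.log n)^16)^3 = (n:ℝ) * (Real.log n)^48 := by
      rw [mul_pow, hX3]
      norm_num [← pow_mul]
    rw [e]
    refine lt_of_le_of_lt h2 ?_
    have : (Real.log n)^39 < (Real.log n)^48 := pow_lt_pow_right₀ hL (by norm_num)
    nlinarith

theorem stmt_18 : ∀ᶠ n : ℕ in Filter.atTop, ∀ a : Fin 4 → ℕ,
    (∀ i, 0 < a i ∧ (n : ℝ) / Real.log n ≤ (a i : ℝ) ∧ (a i : ℝ) ≤ (n : ℝ) ∧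
      ∀ d : ℕ, 0 < d → d ^ 2 ∣ a i → (d : ℝ) ≤ Real.log n) →
    (∃ x : ℕ, 0 < x ∧ (∏ i, a i) = x ^ 3) →
    ∀ i, ∃ u v w : ℕ, 0 < u ∧ 0 < v ∧ 0 < w ∧
      (n : ℝ) ^ ((1 : ℝ)/3) / (Real.log n) ^ 16 < (u : ℝ) ∧
      (u : ℝ) < (n : ℝ) ^ ((1 : ℝ)/3) * (Real.log n) ^ 16 ∧
      (n : ℝ) ^ ((1 : ℝ)/3) / (Real.log n) ^ 16 < (v : ℝ) ∧
      (v : ℝ) < (n : ℝ) ^ ((1 : ℝ)/3) * (Real.log n) ^ 16 ∧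
      (n : ℝ) ^ ((1 : ℝ)/3) / (Real.log n) ^ 16 < (w : ℝ) ∧
      (w : ℝ) < (n : ℝ) ^ ((1 : ℝ)/3) * (Real.log n) ^ 16 ∧
      a i = u * v * w := by
  filter_upwards [eventually_ge_atTop 3] with n hn
  intro a ha hcube
  obtain ⟨x, hx0, hxc⟩ := hcube
  classical
  have hapos : ∀ i, 0 < a i := fun i => (ha i).1
  have hane : ∀ i, a i ≠ 0 := fun i => (hapos i).ne'
  set L : ℝ := Real.log n with hLdef
  have hn0 : 0 < n := by omega
  have hL1 : 1 < L := by
    have h3 : (Real.exp 1) < 3 := by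
      have := Real.exp_one_lt_d9; linarith
    have h1 : 1 < Real.log 3 := (Real.lt_log_iff_exp_lt (by norm_num)).2 h3
    have h2 : Real.log 3 ≤ L := Real.log_le_log (by norm_num) (by exact_mod_cast hn)
    linarith
  have hL0 : (0:ℝ) < L := lt_trans one_pos hL1
  -- squarefree decomposition
  choose m b hmb hm using fun i => Nat.sq_mul_squarefree (a i)
  have hmne : ∀ i, m i ≠ 0 := fun i => (hm i).ne_zero
  have hbne : ∀ i, b i ≠ 0 := by
    intro i h
    apply hane i
    rw [← hmb i, h]
    ring
  have hbL : ∀ i, (b i : ℝ) ≤ L := fun i =>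
    (ha i).2.2.2 (b i) (Nat.pos_of_ne_zero (hbne i)) ⟨m i, (hmb i).symm⟩
  -- the product
  set N := ∏ i, a i with hNdef
  have hNne : N ≠ 0 := Finset.prod_ne_zero_iff.mpr (fun i _ => hane i)
  -- support of a clean prime has size 3
  have hcard3 : ∀ q : ℕ, q.Prime → (∀ i, ¬ q^2 ∣ a i) → q ∣ N →
      (univ.filter (fun i => q ∣ a i)).card = 3 := by
    intro q hq hclean hqN
    have he1 : ∀ i, (a i).factorization q ≤ 1 := by
      intro i
      by_contra h
      exact hclean i ((Nat.Prime.pow_dvd_iff_le_factorization hq (hane i)).2 (by omega))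
    have hsum : N.factorization q = ∑ i, (a i).factorization q := by
      rw [hNdef, Nat.factorization_prod (fun i _ => hane i)]; rfl
    have hN3 : N.factorization q = 3 * x.factorization q := by
      rw [hxc, Nat.factorization_pow]; rfl
    have hcardsum : (univ.filter (fun i => q ∣ a i)).card = ∑ i, (a i).factorization q := by
      rw [Finset.card_filter]
      refine Finset.sum_congr rfl ?_
      intro i _
      by_cases h : q ∣ a i
      · have h1 : 1 ≤ (a i).factorization q :=
          (Nat.Prime.dvd_iff_one_le_factorization hq (hane i)).1 h
        have h2 := he1 i
        simp only [h, if_true]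
        omega
      · simp [h, Nat.factorization_eq_zero_of_not_dvd h]
    have hpos : 1 ≤ N.factorization q := (Nat.Prime.dvd_iff_one_le_factorization hq hNne).1 hqN
    have hle4 : ∑ i, (a i).factorization q ≤ 4 := by
      calc ∑ i, (a i).factorization q ≤ ∑ _i : Fin 4, 1 :=
            Finset.sum_le_sum (fun i _ => he1 i)
        _ = 4 := by simp
    omega
  -- the clean-prime sets
  set F := N.primeFactors.filter
      (fun q => (∀ i, ¬ q^2 ∣ a i) ∧ (univ.filter (fun i => q ∣ a i)).card = 3) with hFdef
  set R : Fin 4 → ℕ := fun j => ∏ q ∈ F.filter (fun q => ¬ q ∣ a j), q with hRdef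
  set K : Fin 4 → ℕ := fun i => ∏ q ∈ F.filter (fun q => q ∣ a i), q with hKdef
  set G := ∏ q ∈ F, q with hGdef
  have hFprime : ∀ q ∈ F, q.Prime := fun q hq =>
    Nat.prime_of_mem_primeFactors (Finset.mem_filter.1 hq).1
  have hKpos : ∀ i, 0 < K i := fun i => Finset.prod_pos
    (fun q hq => (hFprime q (Finset.mem_filter.1 hq).1).pos)
  have hRpos : ∀ j, 0 < R j := fun j => Finset.prod_pos
    (fun q hq => (hFprime q (Finset.mem_filter.1 hq).1).pos)
  have hKR : ∀ i, K i * R i = G := fun i =>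
    Finset.prod_filter_mul_prod_filter_not F (fun q => q ∣ a i) _
  -- decomposition a i = t i * K i
  set V : Fin 4 → ℕ := fun i =>
    ∏ q ∈ (m i).primeFactors.filter (fun q => ¬ ∀ k, ¬ q^2 ∣ a k), q with hVdef
  set t : Fin 4 → ℕ := fun i => b i ^ 2 * V i with htdef
  have hKm : ∀ i, (m i).primeFactors.filter (fun q => ∀ k, ¬ q^2 ∣ a k)
      = F.filter (fun q => q ∣ a i) := by
    intro i
    ext q
    simp only [Finset.mem_filter, Nat.mem_primeFactors, hFdef]
    constructor
    · rintro ⟨⟨hq, hqm, -⟩, hclean⟩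
      have hqa : q ∣ a i := hqm.trans ⟨b i ^ 2, by rw [← hmb i]; ring⟩
      have hqN : q ∣ N := hqa.trans (Finset.dvd_prod_of_mem a (Finset.mem_univ i))
      exact ⟨⟨⟨hq, hqN, hNne⟩, hclean, hcard3 q hq hclean hqN⟩, hqa⟩
    · rintro ⟨⟨⟨hq, hqN, -⟩, hclean, hc3⟩, hqa⟩
      refine ⟨⟨hq, ?_, hmne i⟩, hclean⟩
      have hqa' : q ∣ b i ^ 2 * m i := by rw [hmb i]; exact hqa
      rcases (Nat.Prime.dvd_mul hq).1 hqa' with h | h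
      · exfalso
        have hqb : q ∣ b i := hq.dvd_of_dvd_pow h
        exact hclean i ((pow_dvd_pow_of_dvd hqb 2).trans ⟨m i, (hmb i).symm⟩)
      · exact h
  have hdecomp : ∀ i, a i = t i * K i := by
    intro i
    have hmsplit : K i * V i = m i := by
      rw [hKdef]
      simp only
      rw [← hKm i, hVdef]
      simp only
      rw [Finset.prod_filter_mul_prod_filter_not]
      exact Nat.prod_primeFactors_of_squarefree (hm i)
    calc a i = b i ^ 2 * m i := (hmb i).symm
      _ = b i ^ 2 * (K i * V i) := by rw [hmsplit]
      _ = t i * K i := by rw [htdef]; ring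
  -- bound on V and t
  set B := ∏ i, b i with hBdef
  have hBne : B ≠ 0 := Finset.prod_ne_zero_iff.mpr (fun i _ => hbne i)
  have hVB : ∀ i, V i ∣ B := by
    intro i
    have hsub : (m i).primeFactors.filter (fun q => ¬ ∀ k, ¬ q^2 ∣ a k) ⊆ B.primeFactors := by
      intro q hq
      simp only [Finset.mem_filter, Nat.mem_primeFactors, not_forall, not_not] at hq
      obtain ⟨⟨hqp, hqm, -⟩, k, hk⟩ := hq
      have hqb : q ∣ b k := by
        by_contra hqb
        have h1 : (a k).factorization q ≤ 1 := by
          rw [← hmb k, Nat.factorization_mul (pow_ne_zero 2 (hbne k)) (hmne k)]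
          have hb0 : (b k).factorization q = 0 := Nat.factorization_eq_zero_of_not_dvd hqb
          have hm1 : (m k).factorization q ≤ 1 := (hm k).natFactorization_le_one q
          simp [Nat.factorization_pow, hb0]
          omega
        have h2 : 2 ≤ (a k).factorization q :=
          (Nat.Prime.pow_dvd_iff_le_factorization hqp (hane k)).1 hk
        omega
      exact Nat.mem_primeFactors.2
        ⟨hqp, hqb.trans (Finset.dvd_prod_of_mem b (Finset.mem_univ k)), hBne⟩
    exact dvd_trans (Finset.prod_dvd_prod_of_subset _ _ _ hsub) (Nat.prod_primeFactors_dvd B)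
  have hVpos : ∀ i, 0 < V i := fun i => Nat.pos_of_ne_zero (fun h => by
    have := hVB i; rw [h] at this; exact hBne (Nat.eq_zero_of_zero_dvd this))
  have htpos : ∀ i, 0 < t i := fun i =>
    mul_pos (pow_pos (Nat.pos_of_ne_zero (hbne i)) 2) (hVpos i)
  have hVL : ∀ i, (V i : ℝ) ≤ L^4 := by
    intro i
    have h1 : (V i : ℝ) ≤ (B : ℝ) := by
      exact_mod_cast Nat.le_of_dvd (Nat.pos_of_ne_zero hBne) (hVB i)
    refine h1.trans ?_
    have h2 : (B : ℝ) = ∏ i, (b i : ℝ) := by rw [hBdef]; push_cast; rfl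
    rw [h2]
    calc ∏ i, (b i : ℝ) ≤ ∏ _i : Fin 4, L :=
          Finset.prod_le_prod (fun i _ => by positivity) (fun i _ => hbL i)
      _ = L^4 := by rw [Finset.prod_const]; norm_num
  have htL : ∀ i, (t i : ℝ) ≤ L^6 := by
    intro i
    have h1 : (t i : ℝ) = (b i : ℝ)^2 * (V i : ℝ) := by rw [htdef]; push_cast; ring
    rw [h1]
    have hb2 : (b i : ℝ)^2 ≤ L^2 := by
      have := hbL i
      have hb0 : (0:ℝ) ≤ (b i : ℝ) := Nat.cast_nonneg _
      nlinarith
    have := hVL i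
    have hV0 : (0:ℝ) ≤ (V i : ℝ) := Nat.cast_nonneg _
    nlinarith
  have ht1 : ∀ i, (1:ℝ) ≤ (t i : ℝ) := fun i => by exact_mod_cast htpos i
  -- ∏ K = G ^ 3
  have hKG : ∏ i, K i = G ^ 3 := by
    rw [hKdef, hGdef]
    simp only
    have h1 : ∀ i : Fin 4, ∏ q ∈ F.filter (fun q => q ∣ a i), q
        = ∏ q ∈ F, if q ∣ a i then q else 1 := fun i => Finset.prod_filter _ _
    rw [Finset.prod_congr rfl (fun i _ => h1 i), Finset.prod_comm, ← Finset.prod_pow]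
    refine Finset.prod_congr rfl ?_
    intro q hq
    have hc : (univ.filter (fun i => q ∣ a i)).card = 3 := (Finset.mem_filter.1 hq).2.2
    rw [← Finset.prod_filter, Finset.prod_const, hc]

  -- product bounds
  have haL : ∀ i, (n:ℝ)/L ≤ (a i : ℝ) := fun i => (ha i).2.1
  have haU : ∀ i, (a i : ℝ) ≤ n := fun i => (ha i).2.2.1
  have hn0' : (0:ℝ) < n := by exact_mod_cast hn0
  have hprodid : (∏ i, (a i:ℝ)) = (G:ℝ)^3 * ∏ i, (t i:ℝ) := by
    have hnat : ∏ i, a i = G^3 * ∏ i, t i := by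
      calc ∏ i, a i = ∏ i, (t i * K i) := Finset.prod_congr rfl (fun i _ => hdecomp i)
        _ = (∏ i, t i) * (∏ i, K i) := Finset.prod_mul_distrib
        _ = G^3 * ∏ i, t i := by rw [hKG]; ring
    calc (∏ i, (a i:ℝ)) = ((∏ i, a i : ℕ) : ℝ) := by push_cast; rfl
      _ = ((G^3 * ∏ i, t i : ℕ) : ℝ) := by rw [hnat]
      _ = (G:ℝ)^3 * ∏ i, (t i:ℝ) := by push_cast; rfl
  have hprodt1 : (1:ℝ) ≤ ∏ i, (t i:ℝ) := by
    have h := Finset.prod_le_prod (s := (univ : Finset (Fin 4))) (f := fun _ : Fin 4 => (1:ℝ)) (g := fun i => (t i:ℝ))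
      (fun i _ => by norm_num) (fun i _ => ht1 i)
    simpa using h
  have hprodt0 : (0:ℝ) < ∏ i, (t i:ℝ) := lt_of_lt_of_le one_pos hprodt1
  have hprodtU : (∏ i, (t i:ℝ)) ≤ L^24 := by
    calc (∏ i, (t i:ℝ)) ≤ ∏ _i : Fin 4, L^6 :=
          Finset.prod_le_prod (fun i _ => by positivity) (fun i _ => htL i)
      _ = L^24 := by rw [Finset.prod_const]; norm_num; ring
  have hprodaL : (n:ℝ)^4/L^4 ≤ ∏ i, (a i:ℝ) := by
    have h1 : ∏ _i : Fin 4, ((n:ℝ)/L) ≤ ∏ i, (a i:ℝ) :=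
      Finset.prod_le_prod (fun i _ => by positivity) (fun i _ => haL i)
    calc (n:ℝ)^4/L^4 = ((n:ℝ)/L)^4 := by rw [div_pow]
      _ = ∏ _i : Fin 4, ((n:ℝ)/L) := by rw [Finset.prod_const]; norm_num
      _ ≤ _ := h1
  have hprodaU : (∏ i, (a i:ℝ)) ≤ (n:ℝ)^4 := by
    calc (∏ i, (a i:ℝ)) ≤ ∏ _i : Fin 4, (n:ℝ) :=
          Finset.prod_le_prod (fun i _ => Nat.cast_nonneg _) (fun i _ => haU i)
      _ = (n:ℝ)^4 := by rw [Finset.prod_const]; norm_num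
  have hG3U : (G:ℝ)^3 ≤ (n:ℝ)^4 := by
    have hG0 : (0:ℝ) ≤ (G:ℝ)^3 := by positivity
    calc (G:ℝ)^3 ≤ (G:ℝ)^3 * ∏ i, (t i:ℝ) := le_mul_of_one_le_right hG0 hprodt1
      _ = ∏ i, (a i:ℝ) := hprodid.symm
      _ ≤ (n:ℝ)^4 := hprodaU
  have hG3L : (n:ℝ)^4/L^28 ≤ (G:ℝ)^3 := by
    have key : (n:ℝ)^4/L^28 * (∏ i, (t i:ℝ)) ≤ (G:ℝ)^3 * (∏ i, (t i:ℝ)) := by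
      calc (n:ℝ)^4/L^28 * (∏ i, (t i:ℝ)) ≤ (n:ℝ)^4/L^28 * L^24 :=
            mul_le_mul_of_nonneg_left hprodtU (by positivity)
        _ = (n:ℝ)^4/L^4 := by field_simp
        _ ≤ ∏ i, (a i:ℝ) := hprodaL
        _ = (G:ℝ)^3 * (∏ i, (t i:ℝ)) := hprodid
    exact le_of_mul_le_mul_right key hprodt0
  -- R bounds
  have hRa : ∀ j, (R j:ℝ) * (a j:ℝ) = (G:ℝ) * (t j:ℝ) := by
    intro j
    have hnat : R j * a j = G * t j := by
      rw [hdecomp j, ← hKR j]; ring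
    exact_mod_cast congrArg (fun k : ℕ => (k:ℝ)) hnat
  have hRcube : ∀ j, (R j:ℝ)^3 * (a j:ℝ)^3 = (G:ℝ)^3 * (t j:ℝ)^3 := by
    intro j
    rw [← mul_pow, ← mul_pow, hRa j]
  have hR3L : ∀ j, (n:ℝ)/L^28 ≤ (R j:ℝ)^3 := by
    intro j
    have ha3pos : (0:ℝ) < (a j:ℝ)^3 := by
      have : (0:ℝ) < (a j:ℝ) := by exact_mod_cast hapos j
      positivity
    have key : (n:ℝ)/L^28 * (a j:ℝ)^3 ≤ (R j:ℝ)^3 * (a j:ℝ)^3 := by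
      have ha3U : (a j:ℝ)^3 ≤ (n:ℝ)^3 := pow_le_pow_left₀ (Nat.cast_nonneg _) (haU j) 3
      have ht3 : (1:ℝ) ≤ (t j:ℝ)^3 := one_le_pow₀ (ht1 j)
      calc (n:ℝ)/L^28 * (a j:ℝ)^3 ≤ (n:ℝ)/L^28 * (n:ℝ)^3 :=
            mul_le_mul_of_nonneg_left ha3U (by positivity)
        _ = (n:ℝ)^4/L^28 := by field_simp
        _ ≤ (G:ℝ)^3 := hG3L
        _ ≤ (G:ℝ)^3 * (t j:ℝ)^3 := le_mul_of_one_le_right (by positivity) ht3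
        _ = (R j:ℝ)^3 * (a j:ℝ)^3 := (hRcube j).symm
    exact le_of_mul_le_mul_right key ha3pos
  have hR3U : ∀ j, (R j:ℝ)^3 ≤ (n:ℝ)*L^21 := by
    intro j
    have hR30 : (0:ℝ) ≤ (R j:ℝ)^3 := by positivity
    have h1 : (R j:ℝ)^3 * ((n:ℝ)^3/L^3) ≤ (n:ℝ)^4 * L^18 := by
      have haL3 : (n:ℝ)^3/L^3 ≤ (a j:ℝ)^3 := by
        rw [← div_pow]
        exact pow_le_pow_left₀ (by positivity) (haL j) 3
      have ht3U : (t j:ℝ)^3 ≤ L^18 := by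
        calc (t j:ℝ)^3 ≤ (L^6)^3 := pow_le_pow_left₀ (Nat.cast_nonneg _) (htL j) 3
          _ = L^18 := by ring
      calc (R j:ℝ)^3 * ((n:ℝ)^3/L^3) ≤ (R j:ℝ)^3 * (a j:ℝ)^3 :=
            mul_le_mul_of_nonneg_left haL3 hR30
        _ = (G:ℝ)^3 * (t j:ℝ)^3 := hRcube j
        _ ≤ (n:ℝ)^4 * L^18 := mul_le_mul hG3U ht3U (by positivity) (by positivity)
    have h2 : (R j:ℝ)^3 * (n:ℝ)^3 ≤ ((n:ℝ)*L^21) * (n:ℝ)^3 := by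
      have e1 : (R j:ℝ)^3 * (n:ℝ)^3 = ((R j:ℝ)^3 * ((n:ℝ)^3/L^3)) * L^3 := by
        field_simp
      rw [e1]
      calc ((R j:ℝ)^3 * ((n:ℝ)^3/L^3)) * L^3 ≤ ((n:ℝ)^4 * L^18) * L^3 :=
            mul_le_mul_of_nonneg_right h1 (by positivity)
        _ = ((n:ℝ)*L^21) * (n:ℝ)^3 := by ring
    exact le_of_mul_le_mul_right h2 (by positivity)
  -- splitting K i into the three R j
  have hnot1 : ∀ q ∈ F, ∃ j0 : Fin 4, univ.filter (fun k => ¬ q ∣ a k) = {j0} := by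
    intro q hq
    have hc3 : (univ.filter (fun i => q ∣ a i)).card = 3 := (Finset.mem_filter.1 hq).2.2
    have hadd := Finset.card_filter_add_card_filter_not
      (s := (univ : Finset (Fin 4))) (p := fun i => q ∣ a i)
    have hcardu : (univ : Finset (Fin 4)).card = 4 := by simp
    exact Finset.card_eq_one.1 (by omega)
  have hKsplit : ∀ i, K i = ∏ j ∈ univ.erase i, R j := by
    intro i
    have hsetid : F.filter (fun q => q ∣ a i)
        = (univ.erase i).biUnion (fun j => F.filter (fun q => ¬ q ∣ a j)) := by
      ext q
      simp only [Finset.mem_filter, Finset.mem_biUnion, Finset.mem_erase, Finset.mem_univ,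
        and_true]
      constructor
      · rintro ⟨hqF, hqa⟩
        obtain ⟨j0, hj0⟩ := hnot1 q hqF
        have hj0mem : j0 ∈ univ.filter (fun k => ¬ q ∣ a k) := by
          rw [hj0]; exact Finset.mem_singleton_self _
        have hj0n : ¬ q ∣ a j0 := (Finset.mem_filter.1 hj0mem).2
        have hji : j0 ≠ i := fun h => hj0n (h ▸ hqa)
        exact ⟨j0, hji, hqF, hj0n⟩
      · rintro ⟨j, hji, hqF, hqj⟩
        refine ⟨hqF, ?_⟩
        by_contra hni
        obtain ⟨j0, hj0⟩ := hnot1 q hqF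
        have h1 : i ∈ univ.filter (fun k => ¬ q ∣ a k) := by
          simp only [Finset.mem_filter, Finset.mem_univ, true_and]; exact hni
        have h2 : j ∈ univ.filter (fun k => ¬ q ∣ a k) := by
          simp only [Finset.mem_filter, Finset.mem_univ, true_and]; exact hqj
        rw [hj0] at h1 h2
        simp only [Finset.mem_singleton] at h1 h2
        exact hji (h2.trans h1.symm)
    have hdisj : (↑(univ.erase i) : Set (Fin 4)).PairwiseDisjoint
        (fun j => F.filter (fun q => ¬ q ∣ a j)) := by
      intro j _ j' _ hne
      refine Finset.disjoint_left.2 ?_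
      intro q hq hq'
      obtain ⟨j0, hj0⟩ := hnot1 q (Finset.mem_filter.1 hq).1
      have h1 : j ∈ univ.filter (fun k => ¬ q ∣ a k) := by
        simp only [Finset.mem_filter, Finset.mem_univ, true_and]
        exact (Finset.mem_filter.1 hq).2
      have h2 : j' ∈ univ.filter (fun k => ¬ q ∣ a k) := by
        simp only [Finset.mem_filter, Finset.mem_univ, true_and]
        exact (Finset.mem_filter.1 hq').2
      rw [hj0] at h1 h2
      simp only [Finset.mem_singleton] at h1 h2
      exact hne (h1.trans h2.symm)
    calc K i = ∏ q ∈ F.filter (fun q => q ∣ a i), q := rfl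
      _ = ∏ q ∈ (univ.erase i).biUnion (fun j => F.filter (fun q => ¬ q ∣ a j)), q := by
          rw [hsetid]
      _ = ∏ j ∈ univ.erase i, ∏ q ∈ F.filter (fun q => ¬ q ∣ a j), q :=
          Finset.prod_biUnion hdisj
      _ = ∏ j ∈ univ.erase i, R j := rfl
  -- endgame
  intro i
  have hcarde : (univ.erase i).card = 3 := by
    rw [Finset.card_erase_of_mem (Finset.mem_univ i)]
    simp
  obtain ⟨j1, j2, j3, h12, h13, h23, heq⟩ := Finset.card_eq_three.1 hcarde
  have hprod3 : ∏ j ∈ univ.erase i, R j = R j1 * (R j2 * R j3) := by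
    rw [heq, Finset.prod_insert (by simp [h12, h13]),
      Finset.prod_insert (by simp [h23]), Finset.prod_singleton]
  have hfact : a i = (t i * R j1) * R j2 * R j3 := by
    rw [hdecomp i, hKsplit i, hprod3]; ring
  have hz1 : (n:ℝ)^((1:ℝ)/3) / L^16 < ((t i * R j1 : ℕ):ℝ) ∧
      ((t i * R j1 : ℕ):ℝ) < (n:ℝ)^((1:ℝ)/3) * L^16 := by
    refine cube_root_range hL1 hn0 ?_ ?_
    · have e : ((t i * R j1 : ℕ):ℝ)^3 = (t i:ℝ)^3 * (R j1:ℝ)^3 := by push_cast; ring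
      rw [e]
      calc (n:ℝ)/L^28 ≤ (R j1:ℝ)^3 := hR3L j1
        _ ≤ (t i:ℝ)^3 * (R j1:ℝ)^3 :=
            le_mul_of_one_le_left (by positivity) (one_le_pow₀ (ht1 i))
    · have e : ((t i * R j1 : ℕ):ℝ)^3 = (t i:ℝ)^3 * (R j1:ℝ)^3 := by push_cast; ring
      rw [e]
      have ht3U : (t i:ℝ)^3 ≤ L^18 := by
        calc (t i:ℝ)^3 ≤ (L^6)^3 := pow_le_pow_left₀ (Nat.cast_nonneg _) (htL i) 3
          _ = L^18 := by ring
      calc (t i:ℝ)^3 * (R j1:ℝ)^3 ≤ L^18 * ((n:ℝ)*L^21) :=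
            mul_le_mul ht3U (hR3U j1) (by positivity) (by positivity)
        _ = (n:ℝ) * L^39 := by ring
  have hzR : ∀ j : Fin 4, (n:ℝ)^((1:ℝ)/3) / L^16 < ((R j : ℕ):ℝ) ∧
      ((R j : ℕ):ℝ) < (n:ℝ)^((1:ℝ)/3) * L^16 := by
    intro j
    refine cube_root_range hL1 hn0 (hR3L j) ?_
    calc (R j:ℝ)^3 ≤ (n:ℝ)*L^21 := hR3U j
      _ ≤ (n:ℝ)*L^39 := by
          have h21 : L^21 ≤ L^39 := pow_le_pow_right₀ hL1.le (by norm_num)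
          exact mul_le_mul_of_nonneg_left h21 (Nat.cast_nonneg _)
  refine ⟨t i * R j1, R j2, R j3, Nat.mul_pos (htpos i) (hRpos j1), hRpos j2, hRpos j3,
    hz1.1, hz1.2, (hzR j2).1, (hzR j2).2, (hzR j3).1, (hzR j3).2, hfact⟩
end
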